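/- arXiv:2206.06400 — 4 statements merged into one kernel-verified Lean document; each statement's English description precedes it below -/
import Mathlib

section
/- Let 𝔡_OBC be the Lie algebra over ℝ generated by the set {i·Z_j : 1 ≤ j ≤ L} ∪ {i·X_j·X_{j+1} : 1 ≤ j ≤ L−1} inside the 2^L × 2^L complex matrices. Then 𝔡_OBC equals the real linear span of the set {i·Z_j : 1 ≤ j ≤ L} ∪ {i·T^{AB}_{j,k} : 1 ≤ j < k ≤ L, A, B ∈ {X, Y}}, and 𝔡_OBC has dimension L·(2L−1) as a real vector space. -/
open Matrix

noncomputable section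

/-- The Pauli matrix X. -/
def PX : Matrix (Fin 2) (Fin 2) ℂ := !![0, 1; 1, 0]
/-- The Pauli matrix Y. -/
def PY : Matrix (Fin 2) (Fin 2) ℂ := !![0, -Complex.I; Complex.I, 0]
/-- The Pauli matrix Z. -/
def PZ : Matrix (Fin 2) (Fin 2) ℂ := !![1, 0; 0, -1]

/-- The operator `M_j = I₂^{⊗ j} ⊗ M ⊗ I₂^{⊗ (L-1-j)}` acting as `M` on site `j` and as the
identity elsewhere, on `(ℂ²)^{⊗ L} ≅ ℂ^{2^L}` whose standard basis is indexed by functions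
`v : Fin L → Fin 2`. -/
def site (L : ℕ) (M : Matrix (Fin 2) (Fin 2) ℂ) (j : Fin L) :
    Matrix (Fin L → Fin 2) (Fin L → Fin 2) ℂ :=
  fun v w => ∏ k : Fin L, if k = j then M (v k) (w k) else (if v k = w k then 1 else 0)

/-- The Pauli string `T^{AB}_{j,k} = A_j · Z_{j+1} · Z_{j+2} ⋯ Z_{k-1} · B_k`. -/
def pauliString (L : ℕ) (A B : Matrix (Fin 2) (Fin 2) ℂ) (j k : Fin L) :
    Matrix (Fin L → Fin 2) (Fin L → Fin 2) ℂ :=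
  site L A j *
    (((List.finRange L).filter (fun m => j < m ∧ m < k)).map (site L PZ)).prod *
    site L B k

/-- The parity operator `P = Z_1 · Z_2 ⋯ Z_L`. -/
def parity (L : ℕ) : Matrix (Fin L → Fin 2) (Fin L → Fin 2) ℂ :=
  ((List.finRange L).map (site L PZ)).prod

/-- The generators of the site-dependent protocol with open boundary conditions:
`{i·Z_j : 1 ≤ j ≤ L} ∪ {i·X_j·X_{j+1} : 1 ≤ j ≤ L-1}`. -/
def depGenOBC (L : ℕ) : Set (Matrix (Fin L → Fin 2) (Fin L → Fin 2) ℂ) :=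
  {M | ∃ j : Fin L, M = Complex.I • site L PZ j} ∪
  {M | ∃ (j : ℕ) (h : j + 1 < L),
    M = Complex.I • (site L PX ⟨j, by omega⟩ * site L PX ⟨j + 1, h⟩)}

/-- The claimed basis `{i·Z_j : 1 ≤ j ≤ L} ∪ {i·T^{AB}_{j,k} : 1 ≤ j < k ≤ L, A, B ∈ {X,Y}}`. -/
def depBasis (L : ℕ) : Set (Matrix (Fin L → Fin 2) (Fin L → Fin 2) ℂ) :=
  {M | ∃ j : Fin L, M = Complex.I • site L PZ j} ∪
  {M | ∃ (j k : Fin L) (A B : Matrix (Fin 2) (Fin 2) ℂ),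
    j < k ∧ A ∈ ({PX, PY} : Set (Matrix (Fin 2) (Fin 2) ℂ)) ∧
    B ∈ ({PX, PY} : Set (Matrix (Fin 2) (Fin 2) ℂ)) ∧
    M = Complex.I • pauliString L A B j k}

attribute [local instance 100] LieRing.ofAssociativeRing

/-! In the Jordan–Wigner picture the generators are the products `γ_a γ_{a+1}` of consecutive
Majorana operators `γ_{2j} = Z_0 ⋯ Z_{j-1} X_j`, `γ_{2j+1} = Z_0 ⋯ Z_{j-1} Y_j` (sites
`0`-based), and the claimed basis consists of the products `±γ_a γ_b`, `a < b`. Since the `γ_a`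
are anticommuting involutions, `⁅γ_a γ_b, γ_b γ_c⁆ = 2 γ_a γ_c` and the span of all `γ_a γ_b` is
closed under brackets (it is `so(2L)`); so consecutive products generate every `γ_a γ_b`. These
`(2L choose 2)` products are linearly independent, which gives the dimension `L (2L - 1)`. -/

structure IsMajoranaFamily {ι A : Type*} [Ring A] (γ : ι → A) : Prop where
  mul_self : ∀ a, γ a * γ a = 1
  anticomm : ∀ a b, a ≠ b → γ a * γ b = -(γ b * γ a)

section QuadraticSpan

variable {ι A : Type*} [Ring A]

def quadMonomial [LT ι] (γ : ι → A) (p : {p : ι × ι // p.1 < p.2}) : A := γ p.1.1 * γ p.1.2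

def quadSpan (K : Type*) [Semiring K] [Module K A] [LT ι] (γ : ι → A) : Submodule K A :=
  Submodule.span K (Set.range (quadMonomial γ))

def adjacentProducts {n : ℕ} (γ : Fin n → A) : Set A :=
  {x | ∃ a b : Fin n, (a : ℕ) + 1 = b ∧ x = γ a * γ b}

end QuadraticSpan

theorem eq_of_mem_pair_of_lt {α : Type*} [LinearOrder α] {a b c d : α} (hab : a < b)
    (hcd : c < d) (hc : c = a ∨ c = b) (hd : d = a ∨ d = b) : a = c ∧ b = d := by
  rcases hc with rfl | rfl <;> rcases hd with rfl | rfl <;> simp_all [lt_asymm hab]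

theorem Fin.card_subtype_fst_lt_snd (n : ℕ) :
    Fintype.card {p : Fin n × Fin n // p.1 < p.2} = n.choose 2 := by
  let e : {p : Fin n × Fin n // p.1 < p.2} ≃ Σ b : Fin n, Fin b :=
    { toFun := fun p => ⟨p.1.2, ⟨p.1.1, p.2⟩⟩
      invFun := fun s => ⟨(⟨s.2, s.2.2.trans s.1.2⟩, s.1), s.2.2⟩
      left_inv := fun _ => rfl
      right_inv := fun _ => rfl }
  rw [Fintype.card_congr e, Fintype.card_sigma]
  simp only [Fintype.card_fin]
  rw [Fin.sum_univ_eq_sum_range (fun i => i) n, Finset.sum_range_id, Nat.choose_two_right]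

namespace IsMajoranaFamily

section General

variable {ι A : Type*} [Ring A] {γ : ι → A} (hγ : IsMajoranaFamily γ)
include hγ

theorem lie_mul_mul {a b c : ι} (hab : a ≠ b) (hbc : b ≠ c) (hca : c ≠ a) :
    ⁅γ a * γ b, γ b * γ c⁆ = 2 • (γ a * γ c) := by
  have hmid : γ a * γ b * (γ b * γ c) = γ a * γ c := by
    rw [mul_assoc, ← mul_assoc (γ b), hγ.mul_self, one_mul]
  have hswap : γ b * γ c * (γ a * γ b) = -(γ a * γ c) := by
    calc γ b * γ c * (γ a * γ b) = γ b * (γ c * (γ a * γ b)) := by noncomm_ring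
      _ = γ b * γ b * (γ c * γ a) := by
        rw [hγ.anticomm a b hab, mul_neg, ← mul_assoc (γ c), hγ.anticomm c b hbc.symm]
        noncomm_ring
      _ = -(γ a * γ c) := by rw [hγ.mul_self, one_mul, hγ.anticomm c a hca]
  rw [Ring.lie_def, hmid, hswap, sub_neg_eq_add, two_nsmul]

theorem commute_mul {a b c : ι} (hab : a ≠ b) (hac : a ≠ c) : Commute (γ a) (γ b * γ c) := by
  rw [Commute, SemiconjBy, ← mul_assoc, hγ.anticomm _ _ hab, neg_mul, mul_assoc,
    hγ.anticomm _ _ hac]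
  noncomm_ring

theorem isUnit_mul (a b : ι) : IsUnit (γ a * γ b) :=
  have hunit : ∀ a, IsUnit (γ a) := fun a => ⟨⟨γ a, γ a, hγ.mul_self a, hγ.mul_self a⟩, rfl⟩
  (hunit a).mul (hunit b)

theorem mul_sub_conj_mul [DecidableEq ι] {a b : ι} (hab : a ≠ b) (e : ι) :
    γ a * γ b - γ e * (γ a * γ b) * γ e = if e = a ∨ e = b then 2 • (γ a * γ b) else 0 := by
  split_ifs with he
  · have hflip : γ e * (γ a * γ b) * γ e = -(γ a * γ b) := by
      rcases he with rfl | rfl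
      · rw [← mul_assoc, hγ.mul_self, one_mul, hγ.anticomm _ _ hab.symm]
      · rw [mul_assoc, mul_assoc, hγ.mul_self, mul_one, hγ.anticomm _ _ hab.symm]
    rw [hflip, sub_neg_eq_add, two_nsmul]
  · obtain ⟨hea, heb⟩ := not_or.mp he
    rw [(hγ.commute_mul hea heb).eq, mul_assoc, hγ.mul_self, mul_one, sub_self]

section CommRing

variable {K : Type*} [CommRing K] [Algebra K A] [LinearOrder ι]

theorem mul_mem_quadSpan {a b : ι} (hab : a ≠ b) : γ a * γ b ∈ quadSpan K γ := by
  rcases hab.lt_or_gt with h | h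
  · exact Submodule.subset_span ⟨⟨(a, b), h⟩, rfl⟩
  · rw [hγ.anticomm _ _ hab]
    exact neg_mem (Submodule.subset_span ⟨⟨(b, a), h⟩, rfl⟩)

theorem lie_mul_mul_mem_quadSpan {a b c d : ι} (hab : a ≠ b) (hcd : c ≠ d) :
    ⁅γ a * γ b, γ c * γ d⁆ ∈ quadSpan K γ := by
  have chained : ∀ {a b d : ι}, a ≠ b → b ≠ d → ⁅γ a * γ b, γ b * γ d⁆ ∈ quadSpan K γ := by
    intro a b d hab hbd
    rcases eq_or_ne d a with rfl | hda
    · rw [hγ.anticomm b d hbd, lie_neg, lie_self, neg_zero]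
      exact zero_mem _
    · rw [hγ.lie_mul_mul hab hbd hda]
      exact nsmul_mem (hγ.mul_mem_quadSpan hda.symm) 2
  rcases eq_or_ne b c with rfl | hbc
  · exact chained hab hcd
  rcases eq_or_ne b d with rfl | hbd
  · rw [hγ.anticomm c b hcd, lie_neg]
    exact neg_mem (chained hab hcd.symm)
  rcases eq_or_ne a c with rfl | hac
  · rw [hγ.anticomm a b hab, neg_lie]
    exact neg_mem (chained hab.symm hcd)
  rcases eq_or_ne a d with rfl | had
  · rw [hγ.anticomm a b hab, hγ.anticomm c a hcd, neg_lie, lie_neg, neg_neg]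
    exact chained hab.symm hcd.symm
  rw [((hγ.commute_mul hac had).mul_left (hγ.commute_mul hbc hbd)).lie_eq]
  exact zero_mem _

theorem lie_mem_quadSpan {x y : A} (hx : x ∈ quadSpan K γ) (hy : y ∈ quadSpan K γ) :
    ⁅x, y⁆ ∈ quadSpan K γ := by
  induction hx, hy using Submodule.span_induction₂ with
  | mem_mem x y hx hy =>
    obtain ⟨⟨⟨a, b⟩, hab⟩, rfl⟩ := hx
    obtain ⟨⟨⟨c, d⟩, hcd⟩, rfl⟩ := hy
    exact hγ.lie_mul_mul_mem_quadSpan hab.ne hcd.ne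
  | zero_left y hy => simp
  | zero_right x hx => simp
  | add_left x y z _ _ _ hx hy => rw [add_lie]; exact add_mem hx hy
  | add_right x y z _ _ _ hx hy => rw [lie_add]; exact add_mem hx hy
  | smul_left r x y _ _ h => rw [smul_lie]; exact Submodule.smul_mem _ r h
  | smul_right r x y _ _ h => rw [lie_smul]; exact Submodule.smul_mem _ r h

end CommRing

section Field

variable {K : Type*} [Field K] [Algebra K A] [NeZero (2 : K)] [LinearOrder ι] [Nontrivial A]

theorem linearIndependent_quadMonomial : LinearIndependent K (quadMonomial γ) := by
  -- `x ↦ x - γ_e x γ_e` doubles the monomials containing `e` and kills the others;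
  -- applying it for both indices of `q` isolates the coefficient of `q`.
  let T (e : ι) : A →ₗ[K] A :=
    LinearMap.id - LinearMap.mulLeft K (γ e) ∘ₗ LinearMap.mulRight K (γ e)
  have hT : ∀ e p, T e (quadMonomial γ p) =
      (if e = p.1.1 ∨ e = p.1.2 then (2 : K) else 0) • quadMonomial γ p := by
    intro e p
    simp only [T, LinearMap.sub_apply, LinearMap.id_apply, LinearMap.comp_apply,
      LinearMap.mulLeft_apply, LinearMap.mulRight_apply, quadMonomial]
    rw [← mul_assoc, hγ.mul_sub_conj_mul p.2.ne e]
    split_ifs <;> simp [two_smul]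
  rw [linearIndependent_iff']
  intro s g hg q hq
  have hsum := congrArg (fun x => T q.1.2 (T q.1.1 x)) hg
  simp only [map_sum, map_smul, hT, smul_smul, map_zero] at hsum
  rw [Finset.sum_eq_single q] at hsum
  · simpa [(hγ.isUnit_mul _ _).ne_zero, quadMonomial, two_ne_zero] using hsum
  · intro p _ hpq
    split_ifs with h2 h1
    · exact absurd (Subtype.ext (Prod.ext_iff.mpr (eq_of_mem_pair_of_lt p.2 q.2 h2 h1))) hpq
    all_goals simp
  · exact fun h => absurd hq h

theorem finrank_quadSpan [Fintype ι] :
    Module.finrank K (quadSpan K γ) = Fintype.card {p : ι × ι // p.1 < p.2} :=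
  finrank_span_eq_card hγ.linearIndependent_quadMonomial

end Field

end General

section Chain

variable {A K : Type*} [Ring A] [Field K] [Algebra K A] [NeZero (2 : K)] {n : ℕ}
  {γ : Fin n → A} (hγ : IsMajoranaFamily γ)
include hγ

theorem mul_mem_lieSpan_adjacentProducts {a b : Fin n} (hab : a < b) :
    γ a * γ b ∈ LieSubalgebra.lieSpan K A (adjacentProducts γ) := by
  obtain ⟨d, hd⟩ : ∃ d, (b : ℕ) = a + d + 1 := ⟨b - a - 1, by omega⟩
  induction d generalizing b with
  | zero => exact LieSubalgebra.subset_lieSpan ⟨a, b, by omega, rfl⟩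
  | succ d ih =>
    let c : Fin n := ⟨a + d + 1, by omega⟩
    have hac : γ a * γ c ∈ LieSubalgebra.lieSpan K A (adjacentProducts γ) :=
      ih (Fin.mk_lt_mk.mpr (by omega)) rfl
    have hcb : γ c * γ b ∈ LieSubalgebra.lieSpan K A (adjacentProducts γ) :=
      LieSubalgebra.subset_lieSpan ⟨c, b, by simp [c]; omega, rfl⟩
    have hbracket : γ a * γ b = (2 : K)⁻¹ • ⁅γ a * γ c, γ c * γ b⁆ := by
      rw [hγ.lie_mul_mul (Fin.ne_of_val_ne (by simp [c]; omega))
        (Fin.ne_of_val_ne (by simp [c]; omega)) (Fin.ne_of_val_ne (by omega)),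
        ← Nat.cast_smul_eq_nsmul K, smul_smul, Nat.cast_ofNat, inv_mul_cancel₀ two_ne_zero,
        one_smul]
    rw [hbracket]
    exact Submodule.smul_mem _ _ (LieSubalgebra.lie_mem _ hac hcb)

theorem lieSpan_adjacentProducts :
    (LieSubalgebra.lieSpan K A (adjacentProducts γ)).toSubmodule = quadSpan K γ := by
  apply le_antisymm
  · let Q : LieSubalgebra K A := { quadSpan K γ with lie_mem' := hγ.lie_mem_quadSpan }
    have hle : LieSubalgebra.lieSpan K A (adjacentProducts γ) ≤ Q := by
      rw [LieSubalgebra.lieSpan_le]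
      rintro _ ⟨a, b, hab, rfl⟩
      exact hγ.mul_mem_quadSpan (Fin.ne_of_val_ne (by omega))
    exact hle
  · rw [quadSpan, Submodule.span_le]
    rintro _ ⟨⟨⟨a, b⟩, hab⟩, rfl⟩
    exact hγ.mul_mem_lieSpan_adjacentProducts hab

end Chain

end IsMajoranaFamily

section PiKronecker

variable {ι n R : Type*} [Fintype ι] [CommSemiring R]

def piKronecker (M : ι → Matrix n n R) : Matrix (ι → n) (ι → n) R :=
  fun v w => ∏ i, M i (v i) (w i)

theorem piKronecker_mul [DecidableEq ι] [Fintype n] (M N : ι → Matrix n n R) :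
    piKronecker M * piKronecker N = piKronecker (M * N) := by
  ext v w
  simp only [piKronecker, Matrix.mul_apply, Pi.mul_apply, Fintype.prod_sum,
    Finset.prod_mul_distrib]

theorem piKronecker_one [DecidableEq n] : piKronecker (1 : ι → Matrix n n R) = 1 := by
  ext v w
  simp [piKronecker, Matrix.one_apply, Finset.prod_boole, funext_iff]

theorem piKronecker_smul (c : ι → R) (M : ι → Matrix n n R) :
    piKronecker (fun i => c i • M i) = (∏ i, c i) • piKronecker M := by
  ext v w
  simp only [piKronecker, Matrix.smul_apply, smul_eq_mul, Finset.prod_mul_distrib]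

theorem piKronecker_eq_smul [DecidableEq ι] {M N : ι → Matrix n n R} (j : ι) (c : R)
    (h : ∀ i, M i = (if i = j then c else 1) • N i) : piKronecker M = c • piKronecker N := by
  rw [funext h, piKronecker_smul, Finset.prod_ite_eq' Finset.univ j, if_pos (Finset.mem_univ j)]

end PiKronecker

theorem site_eq_piKronecker (L : ℕ) (M : Matrix (Fin 2) (Fin 2) ℂ) (j : Fin L) :
    site L M j = piKronecker (Pi.mulSingle j M) := by
  ext v w
  refine Finset.prod_congr rfl fun k _ => ?_
  rw [Pi.mulSingle_apply, apply_ite (fun N : Matrix (Fin 2) (Fin 2) ℂ => N (v k) (w k)),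
    Matrix.one_apply]

theorem list_prod_map_site_PZ (L : ℕ) {l : List (Fin L)} (hl : l.Nodup) :
    (l.map (site L PZ)).prod = piKronecker fun m => if m ∈ l then PZ else 1 := by
  induction l with
  | nil => exact piKronecker_one.symm
  | cons a l ih =>
    rw [List.map_cons, List.prod_cons, ih (List.nodup_cons.mp hl).2, site_eq_piKronecker,
      piKronecker_mul]
    congr 1
    ext1 m
    by_cases hm : m = a
    · subst hm
      simp [(List.nodup_cons.mp hl).1]
    · simp [hm]

theorem pauliString_eq_piKronecker (L : ℕ) (A B : Matrix (Fin 2) (Fin 2) ℂ) (j k : Fin L) :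
    pauliString L A B j k = piKronecker fun m =>
      (Pi.mulSingle j A : Fin L → Matrix (Fin 2) (Fin 2) ℂ) m * (if j < m ∧ m < k then PZ else 1) *
        (Pi.mulSingle k B : Fin L → Matrix (Fin 2) (Fin 2) ℂ) m := by
  rw [pauliString, list_prod_map_site_PZ L ((List.nodup_finRange L).filter _),
    site_eq_piKronecker, site_eq_piKronecker, piKronecker_mul, piKronecker_mul]
  congr 1
  ext1 m
  simp [List.mem_filter]

open Complex

theorem PX_mul_PX : PX * PX = 1 := by
  ext i j; fin_cases i <;> fin_cases j <;> simp [PX]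
theorem PY_mul_PY : PY * PY = 1 := by
  ext i j; fin_cases i <;> fin_cases j <;> simp [PY]
theorem PZ_mul_PZ : PZ * PZ = 1 := by
  ext i j; fin_cases i <;> fin_cases j <;> simp [PZ]
theorem PX_mul_PY : PX * PY = I • PZ := by
  ext i j; fin_cases i <;> fin_cases j <;> simp [PX, PY, PZ]
theorem PY_mul_PX : PY * PX = -I • PZ := by
  ext i j; fin_cases i <;> fin_cases j <;> simp [PX, PY, PZ]
theorem PY_mul_PZ : PY * PZ = I • PX := by
  ext i j; fin_cases i <;> fin_cases j <;> simp [PX, PY, PZ]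
theorem PZ_mul_PY : PZ * PY = -I • PX := by
  ext i j; fin_cases i <;> fin_cases j <;> simp [PX, PY, PZ]
theorem PZ_mul_PX : PZ * PX = I • PY := by
  ext i j; fin_cases i <;> fin_cases j <;> simp [PX, PY, PZ]
theorem PX_mul_PZ : PX * PZ = -I • PY := by
  ext i j; fin_cases i <;> fin_cases j <;> simp [PX, PY, PZ]

def jwFactor (a m : ℕ) : Matrix (Fin 2) (Fin 2) ℂ :=
  if 2 * m + 1 < a then PZ else if a = 2 * m then PX else if a = 2 * m + 1 then PY else 1

def majorana (L : ℕ) (a : Fin (2 * L)) : Matrix (Fin L → Fin 2) (Fin L → Fin 2) ℂ :=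
  piKronecker fun m : Fin L => jwFactor a m

theorem jwFactor_mul_self (a m : ℕ) : jwFactor a m * jwFactor a m = 1 := by
  unfold jwFactor
  split_ifs <;> simp [PX_mul_PX, PY_mul_PY, PZ_mul_PZ]

theorem jwFactor_mul_jwFactor_of_lt {a b : ℕ} (hab : a < b) (m : ℕ) :
    jwFactor a m * jwFactor b m =
      (if m = a / 2 then -1 else 1) • (jwFactor b m * jwFactor a m) := by
  unfold jwFactor
  split_ifs <;>
    first | omega | simp [PX_mul_PY, PY_mul_PX, PY_mul_PZ, PZ_mul_PY, PZ_mul_PX, PX_mul_PZ]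

theorem jwFactor_mem_pair {b k : ℕ} (hb : b / 2 = k) :
    jwFactor b k ∈ ({PX, PY} : Set (Matrix (Fin 2) (Fin 2) ℂ)) := by
  unfold jwFactor
  split_ifs <;> first | omega | simp

theorem exists_jwFactor_eq {L : ℕ} (k : Fin L) {B : Matrix (Fin 2) (Fin 2) ℂ}
    (hB : B ∈ ({PX, PY} : Set (Matrix (Fin 2) (Fin 2) ℂ))) :
    ∃ b : Fin (2 * L), (b : ℕ) / 2 = k ∧ jwFactor b k = B := by
  rcases hB with rfl | rfl
  · exact ⟨⟨2 * k, by omega⟩, by simp, by simp [jwFactor]⟩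
  · exact ⟨⟨2 * k + 1, by omega⟩, by simp; omega, by simp [jwFactor]⟩

theorem isMajoranaFamily_majorana (L : ℕ) : IsMajoranaFamily (majorana L) := by
  have hlt : ∀ a b, a < b → majorana L a * majorana L b = -(majorana L b * majorana L a) := by
    intro a b hab
    rw [majorana, majorana, piKronecker_mul, piKronecker_mul,
      piKronecker_eq_smul ⟨a / 2, by omega⟩ (-1), neg_one_smul]
    intro m
    rw [Pi.mul_apply, jwFactor_mul_jwFactor_of_lt hab, Pi.mul_apply]
    simp [Fin.ext_iff]
  refine ⟨fun a => ?_, fun a b hab => ?_⟩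
  · rw [majorana, piKronecker_mul, ← piKronecker_one]
    exact congrArg piKronecker (funext fun m => jwFactor_mul_self a m)
  · rcases hab.lt_or_gt with h | h
    · exact hlt a b h
    · rw [hlt b a h, neg_neg]

theorem majorana_mul_majorana_eq_site_PZ {L : ℕ} (j : Fin L) {a b : Fin (2 * L)}
    (ha : (a : ℕ) = 2 * j) (hb : (b : ℕ) = 2 * j + 1) :
    majorana L a * majorana L b = I • site L PZ j := by
  rw [majorana, majorana, piKronecker_mul, site_eq_piKronecker]
  refine piKronecker_eq_smul j I fun m => ?_
  simp only [Pi.mul_apply, Pi.mulSingle_apply, jwFactor, Fin.ext_iff, ha, hb]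
  rcases Nat.lt_trichotomy m j with h | h | h <;> simp (disch := omega) only [if_pos, if_neg] <;>
    simp [PZ_mul_PZ, PX_mul_PY]

theorem majorana_mul_majorana_eq_site_PX_mul_site_PX {L j : ℕ} (h : j + 1 < L)
    {a b : Fin (2 * L)} (ha : (a : ℕ) = 2 * j + 1) (hb : (b : ℕ) = 2 * j + 2) :
    majorana L a * majorana L b = I • (site L PX ⟨j, by omega⟩ * site L PX ⟨j + 1, h⟩) := by
  rw [majorana, majorana, piKronecker_mul, site_eq_piKronecker, site_eq_piKronecker,
    piKronecker_mul]
  refine piKronecker_eq_smul ⟨j, by omega⟩ I fun m => ?_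
  simp only [Pi.mul_apply, Pi.mulSingle_apply, jwFactor, Fin.ext_iff, ha, hb]
  rcases Nat.lt_trichotomy m j with h | h | h <;>
    rcases Nat.lt_trichotomy m (j + 1) with h' | h' | h' <;>
    simp (disch := omega) only [if_pos, if_neg] <;> first | omega | simp [PZ_mul_PZ, PY_mul_PZ]

theorem majorana_mul_majorana_eq_pauliString_PX {L : ℕ} {j k : Fin L} (hjk : j < k)
    {a b : Fin (2 * L)} (ha : (a : ℕ) = 2 * j + 1) (hb : (b : ℕ) / 2 = k) :
    majorana L a * majorana L b = I • pauliString L PX (jwFactor b k) j k := by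
  rw [majorana, majorana, piKronecker_mul, pauliString_eq_piKronecker]
  refine piKronecker_eq_smul j I fun m => ?_
  simp only [Pi.mul_apply, Pi.mulSingle_apply, jwFactor, Fin.ext_iff, Fin.lt_def, ha] at hjk ⊢
  rcases Nat.lt_trichotomy m j with h | h | h <;>
    rcases Nat.lt_trichotomy m k with h' | h' | h' <;>
    simp (disch := omega) only [if_pos, if_neg] <;> (try split_ifs) <;>
    first | omega | simp [PZ_mul_PZ, PY_mul_PZ]

theorem majorana_mul_majorana_eq_pauliString_PY {L : ℕ} {j k : Fin L} (hjk : j < k)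
    {a b : Fin (2 * L)} (ha : (a : ℕ) = 2 * j) (hb : (b : ℕ) / 2 = k) :
    majorana L a * majorana L b = -I • pauliString L PY (jwFactor b k) j k := by
  rw [majorana, majorana, piKronecker_mul, pauliString_eq_piKronecker]
  refine piKronecker_eq_smul j (-I) fun m => ?_
  simp only [Pi.mul_apply, Pi.mulSingle_apply, jwFactor, Fin.ext_iff, Fin.lt_def, ha] at hjk ⊢
  rcases Nat.lt_trichotomy m j with h | h | h <;>
    rcases Nat.lt_trichotomy m k with h' | h' | h' <;>
    simp (disch := omega) only [if_pos, if_neg] <;> (try split_ifs) <;>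
    first | omega | simp [PZ_mul_PZ, PX_mul_PZ]

theorem depGenOBC_eq_adjacentProducts (L : ℕ) : depGenOBC L = adjacentProducts (majorana L) := by
  ext x
  constructor
  · rintro (⟨j, rfl⟩ | ⟨j, h, rfl⟩)
    · exact ⟨⟨2 * j, by omega⟩, ⟨2 * j + 1, by omega⟩, rfl,
        (majorana_mul_majorana_eq_site_PZ j rfl rfl).symm⟩
    · exact ⟨⟨2 * j + 1, by omega⟩, ⟨2 * j + 2, by omega⟩, rfl,
        (majorana_mul_majorana_eq_site_PX_mul_site_PX h rfl rfl).symm⟩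
  · rintro ⟨a, b, hab, rfl⟩
    obtain ⟨j, hj | hj⟩ := Nat.even_or_odd' a
    · exact Or.inl ⟨⟨j, by omega⟩, majorana_mul_majorana_eq_site_PZ _ hj (by simp; omega)⟩
    · have h : j + 1 < L := by omega
      exact Or.inr ⟨j, h, majorana_mul_majorana_eq_site_PX_mul_site_PX h hj (by omega)⟩

theorem span_depBasis_le_quadSpan (L : ℕ) :
    Submodule.span ℝ (depBasis L) ≤ quadSpan ℝ (majorana L) := by
  have hγ := isMajoranaFamily_majorana L
  rw [Submodule.span_le]
  rintro _ (⟨j, rfl⟩ | ⟨j, k, A, B, hjk, hA, hB, rfl⟩)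
  · rw [← majorana_mul_majorana_eq_site_PZ j (a := ⟨2 * j, by omega⟩)
      (b := ⟨2 * j + 1, by omega⟩) rfl rfl]
    exact hγ.mul_mem_quadSpan (by simp [Fin.ext_iff])
  obtain ⟨b, hb, rfl⟩ := exists_jwFactor_eq k hB
  rcases hA with rfl | rfl
  · rw [← majorana_mul_majorana_eq_pauliString_PX hjk (a := ⟨2 * j + 1, by omega⟩) rfl hb]
    exact hγ.mul_mem_quadSpan (Fin.ne_of_val_ne (by simp only []; omega))
  · rw [← neg_neg (I • _), ← neg_smul,
      ← majorana_mul_majorana_eq_pauliString_PY hjk (a := ⟨2 * j, by omega⟩) rfl hb]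
    exact neg_mem (hγ.mul_mem_quadSpan (Fin.ne_of_val_ne (by simp only []; omega)))

theorem majorana_mul_majorana_mem_span_depBasis {L : ℕ} {a b : Fin (2 * L)} (hab : a < b) :
    majorana L a * majorana L b ∈ Submodule.span ℝ (depBasis L) := by
  let k : Fin L := ⟨b / 2, by omega⟩
  have hb : (b : ℕ) / 2 = k := rfl
  rcases Nat.lt_or_ge (a / 2) (b / 2) with hjk | hjk
  · let j : Fin L := ⟨a / 2, by omega⟩
    have hjk : j < k := hjk
    have hmem := jwFactor_mem_pair hb
    rcases Nat.mod_two_eq_zero_or_one a with ha | ha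
    · rw [majorana_mul_majorana_eq_pauliString_PY hjk (by simp [j]; omega) hb, neg_smul]
      exact neg_mem (Submodule.subset_span (Or.inr ⟨j, k, PY, _, hjk, Or.inr rfl, hmem, rfl⟩))
    · rw [majorana_mul_majorana_eq_pauliString_PX hjk (by simp [j]; omega) hb]
      exact Submodule.subset_span (Or.inr ⟨j, k, PX, _, hjk, Or.inl rfl, hmem, rfl⟩)
  · have hab : (a : ℕ) < b := hab
    rw [majorana_mul_majorana_eq_site_PZ k (by simp [k]; omega) (by simp [k]; omega)]
    exact Submodule.subset_span (Or.inl ⟨k, rfl⟩)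

theorem span_depBasis_eq_quadSpan (L : ℕ) :
    Submodule.span ℝ (depBasis L) = quadSpan ℝ (majorana L) := by
  refine le_antisymm (span_depBasis_le_quadSpan L) ?_
  rw [quadSpan, Submodule.span_le]
  rintro _ ⟨⟨⟨a, b⟩, hab⟩, rfl⟩
  exact majorana_mul_majorana_mem_span_depBasis hab

theorem dep_obc_lie_algebra_general (L : ℕ) :
    (LieSubalgebra.lieSpan ℝ (Matrix (Fin L → Fin 2) (Fin L → Fin 2) ℂ)
        (depGenOBC L)).toSubmodule = Submodule.span ℝ (depBasis L) ∧
    Module.finrank ℝ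
        ↥(LieSubalgebra.lieSpan ℝ (Matrix (Fin L → Fin 2) (Fin L → Fin 2) ℂ) (depGenOBC L)) =
      L * (2 * L - 1) := by
  have hγ := isMajoranaFamily_majorana L
  have hspan : (LieSubalgebra.lieSpan ℝ _ (depGenOBC L)).toSubmodule = quadSpan ℝ (majorana L) := by
    rw [depGenOBC_eq_adjacentProducts]
    exact hγ.lieSpan_adjacentProducts
  refine ⟨hspan.trans (span_depBasis_eq_quadSpan L).symm, ?_⟩
  calc Module.finrank ℝ (LieSubalgebra.lieSpan ℝ _ (depGenOBC L))
      = Module.finrank ℝ (quadSpan ℝ (majorana L)) := by rw [← hspan]; rfl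
    _ = (2 * L).choose 2 := by rw [hγ.finrank_quadSpan, Fin.card_subtype_fst_lt_snd]
    _ = L * (2 * L - 1) := by
      rw [Nat.choose_two_right, mul_assoc, Nat.mul_div_cancel_left _ two_pos]

/-- The Lie algebra `𝔡_OBC` generated over `ℝ` by `{i·Z_j} ∪ {i·X_j X_{j+1}}` equals the real
linear span of `{i·Z_j} ∪ {i·T^{AB}_{j,k} : j < k, A, B ∈ {X,Y}}` and has real dimension
`L·(2L-1)`. -/
theorem dep_obc_lie_algebra (L : ℕ) (hL : 2 ≤ L) :
    (LieSubalgebra.lieSpan ℝ (Matrix (Fin L → Fin 2) (Fin L → Fin 2) ℂ)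
        (depGenOBC L)).toSubmodule = Submodule.span ℝ (depBasis L) ∧
    Module.finrank ℝ
        ↥(LieSubalgebra.lieSpan ℝ (Matrix (Fin L → Fin 2) (Fin L → Fin 2) ℂ) (depGenOBC L)) =
      L * (2 * L - 1) :=
  dep_obc_lie_algebra_general L
end
end

section
/- Let L ≥ 3. Let 𝔡_OBC be the Lie algebra over ℝ generated by {i·Z_j : 1 ≤ j ≤ L} ∪ {i·X_j·X_{j+1} : 1 ≤ j ≤ L−1}, and let 𝔡_PBC be the Lie algebra over ℝ generated by {i·Z_j : 1 ≤ j ≤ L} ∪ {i·X_j·X_{j+1} : 1 ≤ j ≤ L−1} ∪ {i·X_L·X_1}, both inside the 2^L × 2^L complex matrices. Fix a sign s ∈ {+1, −1} and let Π = (Id + s·P)/2 be the projector onto the parity sector P = s. Then the compressed sets {Π·H·Π : H ∈ 𝔡_OBC} and {Π·H·Π : H ∈ 𝔡_PBC} are equal, and this set is a real vector space of dimension L·(2L−1). -/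
open Matrix

attribute [local instance 100] LieRing.ofAssociativeRing

noncomputable section

/-- The generators of the site-dependent protocol with periodic boundary conditions:
the OBC generators together with `i·X_L·X_1`. -/
def depGenPBC (L : ℕ) (hL : 0 < L) : Set (Matrix (Fin L → Fin 2) (Fin L → Fin 2) ℂ) :=
  depGenOBC L ∪
    {Complex.I • (site L PX ⟨L - 1, by omega⟩ * site L PX ⟨0, hL⟩)}

/-- The projector `Π = (Id + s·P)/2` onto the parity sector `P = s`. -/
def paritySector (L : ℕ) (s : ℂ) : Matrix (Fin L → Fin 2) (Fin L → Fin 2) ℂ :=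
  (2 : ℂ)⁻¹ • ((1 : Matrix (Fin L → Fin 2) (Fin L → Fin 2) ℂ) + s • parity L)


/-!
Under the Jordan–Wigner transformation `i Z_j` and `i X_j X_{j+1}` are, up to sgn, the Majorana
bilinears `i γ_m γ_{m+1}` with adjacent indices, and brackets of bilinears sharing one index
produce every `i γ_m γ_n`, `m < n`. All of these commute with `P`, and the boundary term is
`i X_{L-1} X_0 = ± i γ_0 γ_{2L-1} P`, which on the sector `P = s` acts as `± s i γ_0 γ_{2L-1}`.
Hence both compressed algebras are the span of the compressed bilinears, a space closed under
brackets. The `L (2L - 1)` compressed bilinears are linearly independent: `γ_m γ_n` and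
`γ_r γ_s P` are distinct Pauli strings, because `P` is proportional to the product of all `2L`
Majoranas, so `γ_r γ_s P` is a product of `2L - 2 > 2` of them.
-/

namespace ParitySector

open Fin.CommRing

lemma linearIndependent_of_dual_triangular {ι R M : Type*} [LinearOrder ι] [CommRing R]
    [AddCommGroup M] [Module R M] (v : ι → M) (f : ι → Module.Dual R M)
    (hlt : ∀ i j, j < i → f i (v j) = 0) (hdiag : ∀ i, f i (v i) = 1) : LinearIndependent R v := by
  classical
  refine linearIndependent_iff'.mpr fun s g hrel => ?_
  by_contra! hne
  set T := s.filter (g · ≠ 0)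
  have hT : T.Nonempty := by
    obtain ⟨i, hi, hgi⟩ := hne
    exact ⟨i, Finset.mem_filter.mpr ⟨hi, hgi⟩⟩
  set N := T.max' hT
  have hN : N ∈ s ∧ g N ≠ 0 := Finset.mem_filter.mp (T.max'_mem hT)
  have hsum := congrArg (f N) hrel
  rw [map_sum, map_zero, Finset.sum_eq_single N] at hsum
  · simp only [map_smul, smul_eq_mul, hdiag, mul_one] at hsum
    exact hN.2 hsum
  · intro i hi hiN
    by_cases hgi : g i = 0
    · simp [hgi]
    · have hle : i ≤ N := T.le_max' i (Finset.mem_filter.mpr ⟨hi, hgi⟩)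
      simp [hlt N i (lt_of_le_of_ne hle hiN)]
  · exact fun h => absurd hN.1 h

lemma linearIndependent_of_pairwise_dual_ne_zero {ι K V : Type*} [Field K] [AddCommGroup V]
    [Module K V] (v : ι → V) (f : ι → Module.Dual K V) (hoff : Pairwise fun i j => f i (v j) = 0)
    (hdiag : ∀ i, f i (v i) ≠ 0) : LinearIndependent K v :=
  .of_pairwise_dual_eq_zero_one v (fun i => (f i (v i))⁻¹ • f i)
    (fun i j hij => by simp [hoff hij]) (fun i => by simp [hdiag i])

lemma lie_mem_span_of_forall {R A : Type*} [CommRing R] [LieRing A] [LieAlgebra R A] {X : Set A}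
    (hX : ∀ x ∈ X, ∀ y ∈ X, ⁅x, y⁆ ∈ Submodule.span R X) {x y : A}
    (hx : x ∈ Submodule.span R X) (hy : y ∈ Submodule.span R X) : ⁅x, y⁆ ∈ Submodule.span R X := by
  induction hx, hy using Submodule.span_induction₂ with
  | mem_mem x y hx hy => exact hX x hx y hy
  | zero_left y hy => simp
  | zero_right x hx => simp
  | add_left x y z _ _ _ hx hy => simpa [add_lie] using add_mem hx hy
  | add_right x y z _ _ _ hx hy => simpa [lie_add] using add_mem hx hy
  | smul_left r x y _ _ h => simpa [smul_lie] using Submodule.smul_mem _ r h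
  | smul_right r x y _ _ h => simpa [lie_smul] using Submodule.smul_mem _ r h

variable {L : ℕ}

/-! ### Pauli strings -/

def sgn (x : Fin 2) : ℂ := if x = 0 then 1 else -1

lemma sgn_add (x y : Fin 2) : sgn (x + y) = sgn x * sgn y := by
  fin_cases x <;> fin_cases y <;> simp [sgn]

abbrev PhaseSpace (L : ℕ) := (Fin L → Fin 2) × (Fin L → Fin 2)

abbrev Op (L : ℕ) := Matrix (Fin L → Fin 2) (Fin L → Fin 2) ℂ

lemma phaseSpace_add_self (p : PhaseSpace L) : p + p = 0 := by
  have h : ∀ x : Fin 2, x + x = 0 := by decide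
  exact Prod.ext (funext fun k => h _) (funext fun k => h _)

/-- `weyl (a, b) = X^a Z^b := ∏ₖ X_k^{a_k} · ∏ₖ Z_k^{b_k}`. -/
def weyl (p : PhaseSpace L) : Op L :=
  fun v w => if v = w + p.1 then sgn (p.2 ⬝ᵥ w) else 0

lemma weyl_zero : weyl (0 : PhaseSpace L) = 1 := by
  ext v w
  simp [weyl, sgn, Matrix.one_apply]

lemma weyl_mul (p q : PhaseSpace L) :
    weyl p * weyl q = sgn (p.2 ⬝ᵥ q.1) • weyl (p + q) := by
  ext v w
  rw [Matrix.mul_apply, Finset.sum_eq_single (w + q.1)]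
  · simp only [weyl, Matrix.smul_apply, smul_eq_mul, Prod.fst_add, Prod.snd_add,
      add_comm p.1 q.1, ← add_assoc]
    split_ifs
    · simp only [dotProduct_add, add_dotProduct, sgn_add]
      ring
    · simp
  · intro u _ hu
    simp [weyl, hu]
  · simp

lemma sum_sgn_dotProduct {b : Fin L → Fin 2} (hb : b ≠ 0) :
    ∑ w : Fin L → Fin 2, sgn (b ⬝ᵥ w) = 0 := by
  obtain ⟨k, hk⟩ := Function.ne_iff.mp hb
  have hflip : ∀ w, sgn (b ⬝ᵥ (w + Pi.single k 1)) = -sgn (b ⬝ᵥ w) := by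
    intro w
    have hbk : b k = 1 := by revert hk; generalize b k = x; fin_cases x <;> simp
    rw [dotProduct_add, dotProduct_single, hbk, mul_one, sgn_add]
    simp [sgn]
  have hshift := Equiv.sum_comp (Equiv.addRight (Pi.single k 1 : Fin L → Fin 2))
    (fun w => sgn (b ⬝ᵥ w))
  simp only [Equiv.coe_addRight, hflip, Finset.sum_neg_distrib] at hshift
  linear_combination -hshift / 2

lemma trace_weyl {p : PhaseSpace L} (hp : p ≠ 0) : (weyl p).trace = 0 := by
  by_cases h1 : p.1 = 0
  · have h2 : p.2 ≠ 0 := fun h2 => hp (Prod.ext h1 h2)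
    simp [Matrix.trace, weyl, h1, sum_sgn_dotProduct h2]
  · simp [Matrix.trace, weyl, h1]

lemma trace_weyl_mul_weyl {p q : PhaseSpace L} (hpq : p ≠ q) : (weyl p * weyl q).trace = 0 := by
  refine (congrArg Matrix.trace (weyl_mul p q)).trans ?_
  rw [trace_smul, trace_weyl, smul_zero]
  intro h
  apply hpq
  rw [← add_zero p, ← phaseSpace_add_self q, ← add_assoc, h, zero_add]

lemma trace_weyl_mul_self (p : PhaseSpace L) : (weyl p * weyl p).trace ≠ 0 := by
  rw [weyl_mul, phaseSpace_add_self, weyl_zero, trace_smul, trace_one, smul_eq_mul]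
  refine mul_ne_zero ?_ (by simp)
  unfold sgn
  split_ifs <;> norm_num

lemma PZ_apply (x y : Fin 2) : PZ x y = if x = y then sgn y else 0 := by
  fin_cases x <;> fin_cases y <;> simp [PZ, sgn]

lemma PX_apply (x y : Fin 2) : PX x y = if x = y + 1 then 1 else 0 := by
  fin_cases x <;> fin_cases y <;> simp [PX]

lemma site_PZ (j : Fin L) : site L PZ j = weyl (0, Pi.single j 1) := by
  ext v w
  have factor : ∀ k, (if k = j then PZ (v k) (w k) else if v k = w k then 1 else 0) =
      if v k = w k then (if k = j then sgn (w k) else 1) else 0 := by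
    intro k
    by_cases hk : k = j <;> simp [hk, PZ_apply]
  simp only [site, weyl, factor, Finset.prod_ite_zero, Finset.prod_ite_eq', add_zero,
    single_dotProduct, one_mul, Finset.mem_univ, true_implies, if_true, funext_iff]

lemma site_PX (j : Fin L) : site L PX j = weyl (Pi.single j 1, 0) := by
  ext v w
  have factor : ∀ k, (if k = j then PX (v k) (w k) else if v k = w k then 1 else 0) =
      if v k = (w + Pi.single j 1 : Fin L → Fin 2) k then 1 else 0 := by
    intro k
    by_cases hk : k = j <;> simp [hk, PX_apply]
  simp only [site, weyl, factor, Finset.prod_boole, zero_dotProduct, Finset.mem_univ,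
    true_implies, funext_iff]
  simp [sgn]

lemma site_PX_mul_site_PX (a b : Fin L) :
    site L PX a * site L PX b = weyl (Pi.single a 1 + Pi.single b 1, 0) := by
  simp [site_PX, weyl_mul, sgn]

lemma prod_map_weyl_zero (l : List (Fin L → Fin 2)) :
    (l.map fun b => weyl (0, b)).prod = weyl (0, l.sum) := by
  induction l with
  | nil => exact weyl_zero.symm
  | cons b l ih => simp [ih, weyl_mul, sgn]

lemma parity_eq_weyl : parity L = weyl (0, 1) := by
  have hsum : ((List.finRange L).map fun j => (Pi.single j 1 : Fin L → Fin 2)).sum = 1 := by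
    rw [← Fin.sum_univ_def, Finset.univ_sum_single]
    rfl
  rw [parity, funext site_PZ, ← hsum, ← prod_map_weyl_zero, List.map_map]
  rfl

lemma weyl_mul_parity (p : PhaseSpace L) : weyl p * parity L = weyl (p + (0, 1)) := by
  simp [parity_eq_weyl, weyl_mul, sgn]

lemma parity_mul_self : parity L * parity L = 1 := by
  rw [parity_eq_weyl, weyl_mul, phaseSpace_add_self, weyl_zero]
  simp [sgn]

lemma commute_weyl_parity {p : PhaseSpace L} (hp : 1 ⬝ᵥ p.1 = 0) :
    Commute (weyl p) (parity L) := by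
  rw [Commute, SemiconjBy, weyl_mul_parity, parity_eq_weyl, weyl_mul, hp, add_comm]
  simp [sgn]

lemma one_dotProduct_single_add_single (a b : Fin L) :
    (1 : Fin L → Fin 2) ⬝ᵥ (Pi.single a 1 + Pi.single b 1) = 0 := by
  simp only [dotProduct_add, dotProduct_single, Pi.one_apply, mul_one]
  rfl

lemma commute_site_PX_mul_site_PX_parity (a b : Fin L) :
    Commute (site L PX a * site L PX b) (parity L) := by
  rw [site_PX_mul_site_PX]
  exact commute_weyl_parity (one_dotProduct_single_add_single a b)

def symp (p q : PhaseSpace L) : Fin 2 := p.2 ⬝ᵥ q.1 + q.2 ⬝ᵥ p.1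

lemma symp_add_left (p p' q : PhaseSpace L) : symp (p + p') q = symp p q + symp p' q := by
  simp only [symp, Prod.fst_add, Prod.snd_add, dotProduct_add, add_dotProduct]
  ring

lemma symp_add_right (p q q' : PhaseSpace L) : symp p (q + q') = symp p q + symp p q' := by
  simp only [symp, Prod.fst_add, Prod.snd_add, dotProduct_add, add_dotProduct]
  ring

/-- `i^{a·b} X^a Z^b` is Hermitian (e.g. `Y = i X Z`), so `pauli` is `i` times a Hermitian Pauli
string. -/
def pauli (p : PhaseSpace L) : Op L := Complex.I ^ ((p.1 ⬝ᵥ p.2).val + 1) • weyl p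

open Complex in
lemma pauli_phase (x y z w : Fin 2) :
    let c : ℝ := (sgn z - sgn w).re * if x = 0 ∧ y = 0 then 1 else -1
    (c = 0 ↔ z + w = 0) ∧
      I ^ (x.val + 1) * I ^ (y.val + 1) * (sgn z - sgn w) =
        c * I ^ ((x + y + z + w).val + 1) := by
  fin_cases x <;> fin_cases y <;> fin_cases z <;> fin_cases w <;>
    norm_num [sgn, pow_succ, Fin.val_add, mul_comm, show (1 + 1 : Fin 2) = 0 from rfl]

lemma lie_pauli (p q : PhaseSpace L) : ∃ c : ℝ, (c = 0 ↔ symp p q = 0) ∧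
    ⁅pauli p, pauli q⁆ = c • pauli (p + q) := by
  obtain ⟨hc, hphase⟩ := pauli_phase (p.1 ⬝ᵥ p.2) (q.1 ⬝ᵥ q.2) (p.2 ⬝ᵥ q.1) (q.2 ⬝ᵥ p.1)
  refine ⟨_, hc, ?_⟩
  have hlabel : (p + q).1 ⬝ᵥ (p + q).2 =
      p.1 ⬝ᵥ p.2 + q.1 ⬝ᵥ q.2 + p.2 ⬝ᵥ q.1 + q.2 ⬝ᵥ p.1 := by
    simp only [Prod.fst_add, Prod.snd_add, add_dotProduct, dotProduct_add,
      dotProduct_comm q.1 p.2, dotProduct_comm p.1 q.2]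
    abel
  rw [Ring.lie_def, pauli, pauli, pauli, hlabel, smul_mul_smul_comm, smul_mul_smul_comm,
    weyl_mul, weyl_mul, add_comm q, smul_smul, smul_smul, ← sub_smul, ← Complex.coe_smul,
    smul_smul, ← hphase]
  ring_nf

/-! ### Majorana operators -/

/-- Jordan–Wigner: `γ_{2k} = Z_0 ⋯ Z_{k-1} X_k` and `γ_{2k+1} = Z_0 ⋯ Z_{k-1} Y_k`, up to phase. -/
def majorana (n : Fin (2 * L)) : PhaseSpace L :=
  (Pi.single ⟨n / 2, Nat.div_lt_of_lt_mul n.isLt⟩ 1, fun k => if 2 * k.val < n.val then 1 else 0)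

lemma majorana_fst_apply (n : Fin (2 * L)) (k : Fin L) :
    (majorana n).1 k = if k.val = n.val / 2 then 1 else 0 := by
  simp [majorana, Pi.single_apply, Fin.ext_iff]

lemma majorana_snd_apply (n : Fin (2 * L)) (k : Fin L) :
    (majorana n).2 k = if 2 * k.val < n.val then 1 else 0 := rfl

lemma linearIndependent_majorana : LinearIndependent (Fin 2) (majorana (L := L)) := by
  -- `γ_{2k}` is the first Majorana with `a_k = 1`, and `γ_{2k+1}` the first with `b_k = 1`.
  let coord (n : Fin (2 * L)) : Module.Dual (Fin 2) (PhaseSpace L) :=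
    (LinearMap.proj ⟨n / 2, Nat.div_lt_of_lt_mul n.isLt⟩).comp
      (if n.val % 2 = 0 then LinearMap.fst _ _ _ else LinearMap.snd _ _ _)
  refine linearIndependent_of_dual_triangular _ coord (fun n m hmn => ?_) (fun n => ?_)
  · have : m.val < n.val := hmn
    by_cases hn : n.val % 2 = 0 <;>
      simp [coord, hn, majorana_fst_apply, majorana_snd_apply] <;> omega
  · by_cases hn : n.val % 2 = 0
    · simp [coord, hn, majorana_fst_apply]
    · simp [coord, hn, majorana_snd_apply]
      omega

lemma linearCombination_majorana_single (i : Fin (2 * L)) :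
    Fintype.linearCombination (Fin 2) majorana (Pi.single i 1) = majorana i := by
  simp [Fintype.linearCombination_apply, Pi.single_apply]

lemma sum_majorana : ∑ n, majorana n = ((0, 1) : PhaseSpace L) := by
  ext k
  · have hcard : (Finset.univ.filter fun n : Fin (2 * L) => k.val = n.val / 2).card = 2 := by
      rw [Finset.card_eq_two]
      refine ⟨⟨2 * k, by omega⟩, ⟨2 * k + 1, by omega⟩, by simp [Fin.ext_iff], ?_⟩
      ext n
      simp [Fin.ext_iff]
      omega
    simp only [Prod.fst_sum, Finset.sum_apply, majorana_fst_apply, Finset.sum_boole, hcard]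
    rfl
  · have hcard : (Finset.univ.filter fun n : Fin (2 * L) => 2 * k.val < n.val).card =
        2 * L - 1 - 2 * k := by
      rw [← Fin.card_Ioi ⟨2 * k, by omega⟩]
      congr 1
      ext n
      simp [Fin.lt_def]
    simp only [Prod.snd_sum, Finset.sum_apply, majorana_snd_apply, Finset.sum_boole, hcard]
    rw [Fin.val_natCast, Pi.one_apply, Fin.val_one]
    omega

lemma majorana_add_majorana_injective {m n r s : Fin (2 * L)} (hmn : m < n) (hrs : r < s)
    (h : majorana m + majorana n = majorana r + majorana s) : m = r ∧ n = s := by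
  have hinj := linearIndependent_iff_injective_fintypeLinearCombination.mp
    (linearIndependent_majorana (L := L))
  have hsingle : (Pi.single m 1 + Pi.single n 1 : Fin (2 * L) → Fin 2) =
      Pi.single r 1 + Pi.single s 1 :=
    hinj (by simp only [map_add, linearCombination_majorana_single, h])
  rcases (Pi.single_add_single_eq_single_add_single one_ne_zero one_ne_zero).mp hsingle with
    h | ⟨-, rfl, rfl⟩ | ⟨-, rfl, -⟩
  · exact h
  · exact absurd hmn (lt_asymm hrs)
  · exact absurd hmn (lt_irrefl m)

lemma majorana_add_majorana_ne (hL : 3 ≤ L) (m n r s : Fin (2 * L)) :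
    majorana m + majorana n ≠ majorana r + majorana s + (0, 1) := by
  intro h
  have hinj := linearIndependent_iff_injective_fintypeLinearCombination.mp
    (linearIndependent_majorana (L := L))
  have hcoeff : (Pi.single m 1 + Pi.single n 1 : Fin (2 * L) → Fin 2) =
      Pi.single r 1 + Pi.single s 1 + 1 := by
    refine hinj ?_
    simp only [map_add, linearCombination_majorana_single, h, ← sum_majorana]
    simp [Fintype.linearCombination_apply]
  obtain ⟨i, -, hi⟩ := Finset.exists_mem_notMem_of_card_lt_card
    (s := {m, n, r, s}) (t := Finset.univ) (Finset.card_le_four.trans_lt (by simp; omega))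
  simp only [Finset.mem_insert, Finset.mem_singleton, not_or] at hi
  have := congrFun hcoeff i
  simp [hi] at this

lemma symp_majorana (m n : Fin (2 * L)) :
    symp (majorana m) (majorana n) = if m = n then 0 else 1 := by
  simp only [symp, majorana, dotProduct_single, mul_one, Fin.ext_iff]
  split_ifs <;> first | rfl | omega

/-- `γ_m γ_n` up to phase. -/
def quad (m n : Fin (2 * L)) : Op L := pauli (majorana m + majorana n)

lemma quad_comm (m n : Fin (2 * L)) : quad m n = quad n m := by
  rw [quad, quad, add_comm]

lemma commute_quad_parity (m n : Fin (2 * L)) : Commute (quad m n) (parity L) :=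
  (commute_weyl_parity (one_dotProduct_single_add_single _ _)).smul_left _

lemma lie_quad_of_ne {m n r s : Fin (2 * L)} (hmr : m ≠ r) (hms : m ≠ s) (hnr : n ≠ r)
    (hns : n ≠ s) : ⁅quad m n, quad r s⁆ = 0 := by
  obtain ⟨c, hc, h⟩ := lie_pauli (majorana m + majorana n) (majorana r + majorana s)
  have hsymp : symp (majorana m + majorana n) (majorana r + majorana s) = 0 := by
    simp only [symp_add_left, symp_add_right, symp_majorana, if_neg hmr, if_neg hms, if_neg hnr,
      if_neg hns]
    rfl
  rw [quad, quad, h, hc.mpr hsymp, zero_smul]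

lemma lie_quad_quad {m n s : Fin (2 * L)} (hmn : m ≠ n) (hns : n ≠ s) (hms : m ≠ s) :
    ∃ c : ℝ, c ≠ 0 ∧ ⁅quad m n, quad n s⁆ = c • quad m s := by
  obtain ⟨c, hc, h⟩ := lie_pauli (majorana m + majorana n) (majorana n + majorana s)
  have hsymp : symp (majorana m + majorana n) (majorana n + majorana s) = 1 := by
    simp only [symp_add_left, symp_add_right, symp_majorana, if_neg hmn, if_neg hns, if_neg hms]
    rfl
  refine ⟨c, fun h0 => by simpa [hsymp] using hc.mp h0, ?_⟩
  rw [quad, quad, h, add_assoc, ← add_assoc (majorana n), phaseSpace_add_self, zero_add]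
  rfl

/-! ### The open chain generates all Majorana bilinears -/

lemma quad_two_mul (j : Fin L) :
    quad ⟨2 * j, by omega⟩ ⟨2 * j + 1, by omega⟩ = Complex.I • site L PZ j := by
  have hlabel : majorana ⟨2 * j, by omega⟩ + majorana ⟨2 * j + 1, by omega⟩ =
      ((0, Pi.single j 1) : PhaseSpace L) := by
    ext k <;> simp only [Prod.fst_add, Prod.snd_add, Pi.add_apply, majorana_fst_apply,
      majorana_snd_apply, Pi.single_apply, Fin.ext_iff] <;> split_ifs <;> first | rfl | omega
  simp [quad, pauli, hlabel, site_PZ]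

lemma quad_two_mul_add_one (j : ℕ) (h : j + 1 < L) :
    quad ⟨2 * j + 1, by omega⟩ ⟨2 * j + 2, by omega⟩ =
      Complex.I • (site L PX ⟨j, by omega⟩ * site L PX ⟨j + 1, h⟩) := by
  have hlabel : majorana ⟨2 * j + 1, by omega⟩ + majorana ⟨2 * j + 2, by omega⟩ =
      ((Pi.single ⟨j, by omega⟩ 1 + Pi.single ⟨j + 1, h⟩ 1, 0) : PhaseSpace L) := by
    ext k <;> simp only [Prod.fst_add, Prod.snd_add, Pi.add_apply, majorana_fst_apply,
      majorana_snd_apply, Pi.single_apply, Fin.ext_iff] <;> split_ifs <;> first | rfl | omega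
  simp [quad, pauli, hlabel, site_PX_mul_site_PX]

lemma quad_mem_depGenOBC (m : ℕ) (h : m + 1 < 2 * L) :
    quad ⟨m, by omega⟩ ⟨m + 1, h⟩ ∈ depGenOBC L := by
  rcases Nat.even_or_odd' m with ⟨j, rfl | rfl⟩
  · exact Or.inl ⟨⟨j, by omega⟩, quad_two_mul ⟨j, by omega⟩⟩
  · exact Or.inr ⟨j, by omega, quad_two_mul_add_one j (by omega)⟩

lemma quad_mem_lieSpan_depGenOBC {m n : Fin (2 * L)} (hmn : m < n) :
    quad m n ∈ LieSubalgebra.lieSpan ℝ (Op L) (depGenOBC L) := by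
  obtain ⟨m, hm⟩ := m
  obtain ⟨n, hn⟩ := n
  change m + 1 ≤ n at hmn
  induction n, hmn using Nat.le_induction with
  | base => exact LieSubalgebra.subset_lieSpan (quad_mem_depGenOBC m hn)
  | succ n hmn ih =>
    obtain ⟨c, hc, hlie⟩ := lie_quad_quad (m := ⟨m, hm⟩) (n := ⟨n, by omega⟩) (s := ⟨n + 1, hn⟩)
      (by simp; omega) (by simp) (by simp; omega)
    rw [← inv_smul_smul₀ hc (quad _ _), ← hlie]
    exact Submodule.smul_mem _ _ (LieSubalgebra.lie_mem _ (ih (by omega))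
      (LieSubalgebra.subset_lieSpan (quad_mem_depGenOBC n hn)))

/-! ### Compression to a parity sector -/

section Sector

variable {s : ℂ}

lemma commute_paritySector {H : Op L} (h : Commute H (parity L)) :
    Commute H (paritySector L s) :=
  ((Commute.one_right H).add_right (h.smul_right s)).smul_right _

lemma parity_mul_paritySector (hs : s = 1 ∨ s = -1) :
    parity L * paritySector L s = s • paritySector L s := by
  rcases hs with rfl | rfl <;>
    simp only [paritySector, mul_smul_comm, mul_add, mul_one, parity_mul_self] <;> module

lemma paritySector_mul_self (hs : s = 1 ∨ s = -1) :
    paritySector L s * paritySector L s = paritySector L s := by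
  nth_rewrite 1 [paritySector]
  rw [smul_mul_assoc, add_mul, one_mul, smul_mul_assoc, parity_mul_paritySector hs, smul_smul,
    mul_self_eq_one_iff.mpr hs, one_smul, ← two_smul ℂ, smul_smul]
  norm_num

lemma paritySector_mul_mul_paritySector (hs : s = 1 ∨ s = -1) {H : Op L}
    (h : Commute H (parity L)) :
    paritySector L s * H * paritySector L s = H * paritySector L s := by
  rw [← (commute_paritySector h).eq, mul_assoc, paritySector_mul_self hs]

lemma lie_mul_paritySector (hs : s = 1 ∨ s = -1) {H K : Op L} (hH : Commute H (parity L))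
    (hK : Commute K (parity L)) :
    ⁅H * paritySector L s, K * paritySector L s⁆ = ⁅H, K⁆ * paritySector L s := by
  have hmul : ∀ {A B : Op L}, Commute B (parity L) →
      A * paritySector L s * (B * paritySector L s) = A * B * paritySector L s := by
    intro A B hB
    rw [mul_assoc, ← mul_assoc _ B, ← (commute_paritySector hB).eq, mul_assoc B,
      paritySector_mul_self hs, mul_assoc]
  rw [Ring.lie_def, Ring.lie_def, hmul hK, hmul hH, sub_mul]

lemma pauli_mul_paritySector (p : PhaseSpace L) :
    pauli p * paritySector L s = (2⁻¹ * Complex.I ^ ((p.1 ⬝ᵥ p.2).val + 1)) •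
      (weyl p + s • weyl (p + (0, 1))) := by
  rw [pauli, paritySector, smul_mul_smul_comm, mul_add, mul_one, mul_smul_comm, weyl_mul_parity,
    mul_comm]

lemma boundary_mul_paritySector (hs : s = 1 ∨ s = -1) (hL : 0 < L) :
    (Complex.I • (site L PX ⟨L - 1, by omega⟩ * site L PX ⟨0, hL⟩)) * paritySector L s =
      s • (quad ⟨0, by omega⟩ ⟨2 * L - 1, by omega⟩ * paritySector L s) := by
  have hlabel : majorana ⟨0, by omega⟩ + majorana ⟨2 * L - 1, by omega⟩ =
      ((Pi.single ⟨L - 1, by omega⟩ 1 + Pi.single ⟨0, hL⟩ 1, 0) + (0, 1) : PhaseSpace L) := by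
    ext k <;> simp only [Prod.fst_add, Prod.snd_add, Pi.add_apply, majorana_fst_apply,
      majorana_snd_apply, Pi.single_apply, Fin.ext_iff, Pi.zero_apply, Pi.one_apply] <;>
      split_ifs <;> first | rfl | omega
  have hquad : quad ⟨0, by omega⟩ ⟨2 * L - 1, by omega⟩ =
      Complex.I • (site L PX ⟨L - 1, by omega⟩ * site L PX ⟨0, hL⟩ * parity L) := by
    rw [quad, pauli, hlabel, site_PX_mul_site_PX, weyl_mul_parity]
    simp [dotProduct_comm _ (1 : Fin L → Fin 2)]
  rw [hquad, smul_mul_assoc, smul_mul_assoc, mul_assoc (_ * _), parity_mul_paritySector hs,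
    mul_smul_comm, smul_comm, smul_smul s, mul_self_eq_one_iff.mpr hs, one_smul]

def compressedQuad (s : ℂ) (t : {p : Fin (2 * L) × Fin (2 * L) // p.1 < p.2}) : Op L :=
  quad t.1.1 t.1.2 * paritySector L s

variable (L) in
def compressedAlgebra (s : ℂ) : Submodule ℝ (Op L) :=
  Submodule.span ℝ (Set.range (compressedQuad s))

lemma quad_mul_paritySector_mem {m n : Fin (2 * L)} (hmn : m ≠ n) :
    quad m n * paritySector L s ∈ compressedAlgebra L s := by
  rcases hmn.lt_or_gt with h | h
  · exact Submodule.subset_span ⟨⟨(m, n), h⟩, rfl⟩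
  · rw [quad_comm]
    exact Submodule.subset_span ⟨⟨(n, m), h⟩, rfl⟩

lemma lie_quad_mul_paritySector_mem {a b c d : Fin (2 * L)} (hab : a ≠ b) (hcd : c ≠ d) :
    ⁅quad a b, quad c d⁆ * paritySector L s ∈ compressedAlgebra L s := by
  have chain : ∀ {x y z : Fin (2 * L)}, x ≠ y → y ≠ z → x ≠ z →
      ⁅quad x y, quad y z⁆ * paritySector L s ∈ compressedAlgebra L s := by
    intro x y z hxy hyz hxz
    obtain ⟨r, -, h⟩ := lie_quad_quad hxy hyz hxz
    rw [h, smul_mul_assoc]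
    exact Submodule.smul_mem _ r (quad_mul_paritySector_mem hxz)
  rcases eq_or_ne a c with rfl | hac
  · rcases eq_or_ne b d with rfl | hbd
    · simp
    · rw [quad_comm a b]
      exact chain hab.symm hcd hbd
  rcases eq_or_ne a d with rfl | had
  · rcases eq_or_ne b c with rfl | hbc
    · simp [quad_comm a b]
    · rw [quad_comm a b, quad_comm c a]
      exact chain hab.symm hcd.symm hbc
  rcases eq_or_ne b c with rfl | hbc
  · exact chain hab hcd had
  rcases eq_or_ne b d with rfl | hbd
  · rw [quad_comm c b]
    exact chain hab hcd.symm hac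
  simp [lie_quad_of_ne hac had hbc hbd]

lemma lie_mem_compressedAlgebra (hs : s = 1 ∨ s = -1) {x y : Op L}
    (hx : x ∈ compressedAlgebra L s) (hy : y ∈ compressedAlgebra L s) :
    ⁅x, y⁆ ∈ compressedAlgebra L s := by
  refine lie_mem_span_of_forall ?_ hx hy
  rintro _ ⟨t, rfl⟩ _ ⟨t', rfl⟩
  rw [compressedQuad, compressedQuad,
    lie_mul_paritySector hs (commute_quad_parity _ _) (commute_quad_parity _ _)]
  exact lie_quad_mul_paritySector_mem t.2.ne t'.2.ne

lemma linearIndependent_compressedQuad (hL : 3 ≤ L) :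
    LinearIndependent ℝ (compressedQuad (L := L) s) := by
  let label (t : {p : Fin (2 * L) × Fin (2 * L) // p.1 < p.2}) := majorana t.1.1 + majorana t.1.2
  let coeff (t : {p : Fin (2 * L) × Fin (2 * L) // p.1 < p.2}) : Module.Dual ℂ (Op L) :=
    (Matrix.traceLinearMap _ ℂ ℂ).comp (LinearMap.mulLeft ℂ (weyl (label t)))
  -- `coeff t` reads off the coefficient of `weyl (label t)`: the Weyl operators are orthogonal
  -- for the trace form.
  have hcoeff : ∀ t t', coeff t (compressedQuad s t') =
      (2⁻¹ * Complex.I ^ (((label t').1 ⬝ᵥ (label t').2).val + 1)) *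
        ((weyl (label t) * weyl (label t')).trace +
          s * (weyl (label t) * weyl (label t' + (0, 1))).trace) := by
    intro t t'
    simp [coeff, compressedQuad, quad, pauli_mul_paritySector, label, mul_add, trace_add,
      trace_smul]
  refine (linearIndependent_of_pairwise_dual_ne_zero _ coeff (fun t t' htt' => ?_)
    (fun t => ?_)).restrict_scalars' ℝ
  · change coeff t (compressedQuad s t') = 0
    rw [hcoeff, trace_weyl_mul_weyl, trace_weyl_mul_weyl (majorana_add_majorana_ne hL _ _ _ _)]
    · simp
    · intro h
      obtain ⟨h1, h2⟩ := majorana_add_majorana_injective t.2 t'.2 h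
      exact htt' (Subtype.ext (Prod.ext h1 h2))
  · rw [hcoeff, trace_weyl_mul_weyl (majorana_add_majorana_ne hL _ _ _ _), mul_zero, add_zero]
    exact mul_ne_zero (by simp) (trace_weyl_mul_self _)

lemma finrank_compressedAlgebra (hL : 3 ≤ L) :
    Module.finrank ℝ (compressedAlgebra L s) = L * (2 * L - 1) := by
  rw [compressedAlgebra, finrank_span_eq_card (linearIndependent_compressedQuad hL),
    Fintype.card_subtype, Fintype.card_product_filter_lt, Fintype.card_fin, Nat.choose_two_right,
    mul_assoc, Nat.mul_div_cancel_left _ two_pos]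

lemma commute_and_compress_mem_of_mem_lieSpan_depGenPBC (hL : 0 < L) (hs : s = 1 ∨ s = -1)
    {H : Op L} (hH : H ∈ LieSubalgebra.lieSpan ℝ (Op L) (depGenPBC L hL)) :
    Commute H (parity L) ∧ paritySector L s * H * paritySector L s ∈ compressedAlgebra L s := by
  have hquad : ∀ {m n : Fin (2 * L)}, m ≠ n → Commute (quad m n) (parity L) ∧
      paritySector L s * quad m n * paritySector L s ∈ compressedAlgebra L s := fun hmn =>
    ⟨commute_quad_parity _ _, by
      rw [paritySector_mul_mul_paritySector hs (commute_quad_parity _ _)]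
      exact quad_mul_paritySector_mem hmn⟩
  induction hH using LieSubalgebra.lieSpan_induction with
  | mem H hH =>
    rcases hH with (⟨j, rfl⟩ | ⟨j, hj, rfl⟩) | rfl
    · rw [← quad_two_mul]
      exact hquad (by simp [Fin.ext_iff])
    · rw [← quad_two_mul_add_one j hj]
      exact hquad (by simp [Fin.ext_iff])
    · have hcomm : Commute (Complex.I • (site L PX ⟨L - 1, by omega⟩ * site L PX ⟨0, by omega⟩))
          (parity L) := (commute_site_PX_mul_site_PX_parity _ _).smul_left _
      refine ⟨hcomm, ?_⟩
      rw [paritySector_mul_mul_paritySector hs hcomm, boundary_mul_paritySector hs]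
      have hmem := quad_mul_paritySector_mem (L := L) (s := s) (m := ⟨0, by omega⟩)
        (n := ⟨2 * L - 1, by omega⟩) (by simp [Fin.ext_iff]; omega)
      rcases hs with rfl | rfl
      · simpa using hmem
      · simpa using neg_mem hmem
  | zero => simp
  | add H K _ _ hH hK =>
    refine ⟨hH.1.add_left hK.1, ?_⟩
    rw [mul_add, add_mul]
    exact add_mem hH.2 hK.2
  | smul r H _ hH =>
    refine ⟨hH.1.smul_left r, ?_⟩
    rw [mul_smul_comm, smul_mul_assoc]
    exact Submodule.smul_mem _ r hH.2
  | lie H K _ _ hH hK =>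
    have hcomm : Commute ⁅H, K⁆ (parity L) :=
      (hH.1.mul_left hK.1).sub_left (hK.1.mul_left hH.1)
    refine ⟨hcomm, ?_⟩
    rw [paritySector_mul_mul_paritySector hs hcomm, ← lie_mul_paritySector hs hH.1 hK.1,
      ← paritySector_mul_mul_paritySector hs hH.1, ← paritySector_mul_mul_paritySector hs hK.1]
    exact lie_mem_compressedAlgebra hs hH.2 hK.2

lemma image_lieSpan_depGenOBC_subset (hL : 0 < L) :
    (fun H => paritySector L s * H * paritySector L s) ''
        ↑(LieSubalgebra.lieSpan ℝ (Op L) (depGenOBC L)) ⊆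
      (fun H => paritySector L s * H * paritySector L s) ''
        ↑(LieSubalgebra.lieSpan ℝ (Op L) (depGenPBC L hL)) :=
  Set.image_mono (LieSubalgebra.lieSpan_mono Set.subset_union_left)

lemma image_lieSpan_depGenPBC_subset (hL : 0 < L) (hs : s = 1 ∨ s = -1) :
    (fun H => paritySector L s * H * paritySector L s) ''
      ↑(LieSubalgebra.lieSpan ℝ (Op L) (depGenPBC L hL)) ⊆ compressedAlgebra L s := by
  rintro _ ⟨H, hH, rfl⟩
  exact (commute_and_compress_mem_of_mem_lieSpan_depGenPBC hL hs hH).2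

lemma compressedAlgebra_subset_image_lieSpan_depGenOBC (hs : s = 1 ∨ s = -1) :
    ↑(compressedAlgebra L s) ⊆ (fun H => paritySector L s * H * paritySector L s) ''
      ↑(LieSubalgebra.lieSpan ℝ (Op L) (depGenOBC L)) := by
  let compress : Op L →ₗ[ℝ] Op L :=
    (LinearMap.mulRight ℝ (paritySector L s)).comp (LinearMap.mulLeft ℝ (paritySector L s))
  have hle : compressedAlgebra L s ≤
      (LieSubalgebra.lieSpan ℝ (Op L) (depGenOBC L)).toSubmodule.map compress := by
    refine Submodule.span_le.mpr ?_
    rintro _ ⟨t, rfl⟩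
    exact ⟨_, quad_mem_lieSpan_depGenOBC t.2,
      paritySector_mul_mul_paritySector hs (commute_quad_parity _ _)⟩
  intro x hx
  obtain ⟨H, hH, rfl⟩ := hle hx
  exact ⟨H, hH, rfl⟩

end Sector

end ParitySector

/-- For `L ≥ 3` and a sign `s ∈ {+1, -1}` with parity projector `Π = (Id + s·P)/2`, the
compressions `{Π·H·Π : H ∈ 𝔡_OBC}` and `{Π·H·Π : H ∈ 𝔡_PBC}` coincide, and this set is a real
vector space of dimension `L·(2L-1)`. -/
theorem dep_parity_sector (L : ℕ) (hL : 3 ≤ L) (s : ℂ) (hs : s = 1 ∨ s = -1) :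
    ((fun H => paritySector L s * H * paritySector L s) ''
        ↑(LieSubalgebra.lieSpan ℝ (Matrix (Fin L → Fin 2) (Fin L → Fin 2) ℂ) (depGenOBC L)) =
      (fun H => paritySector L s * H * paritySector L s) ''
        ↑(LieSubalgebra.lieSpan ℝ (Matrix (Fin L → Fin 2) (Fin L → Fin 2) ℂ)
          (depGenPBC L (by omega)))) ∧
    ∃ W : Submodule ℝ (Matrix (Fin L → Fin 2) (Fin L → Fin 2) ℂ),
      (W : Set (Matrix (Fin L → Fin 2) (Fin L → Fin 2) ℂ)) =
        (fun H => paritySector L s * H * paritySector L s) ''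
          ↑(LieSubalgebra.lieSpan ℝ (Matrix (Fin L → Fin 2) (Fin L → Fin 2) ℂ) (depGenOBC L)) ∧
      Module.finrank ℝ ↥W = L * (2 * L - 1) := by
  have hOBC_PBC := ParitySector.image_lieSpan_depGenOBC_subset (s := s) (by omega : 0 < L)
  have hPBC_W := ParitySector.image_lieSpan_depGenPBC_subset (by omega : 0 < L) hs
  have hW_OBC := ParitySector.compressedAlgebra_subset_image_lieSpan_depGenOBC (L := L) hs
  exact ⟨hOBC_PBC.antisymm (hPBC_W.trans hW_OBC), _, hW_OBC.antisymm (hOBC_PBC.trans hPBC_W),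
    ParitySector.finrank_compressedAlgebra hL⟩
end
end

section
/- Let 1 ≤ i < j ≤ k < l ≤ L and let A, B, C, D ∈ {X, Y}. Then the commutator ⁅i·T^{AB}_{i,j}, i·T^{CD}_{k,l}⁆ satisfies: (1) if j < k, it equals 0; (2) if j = k and B = C, it equals 0; (3) if j = k and (B, C) = (X, Y), it equals −2·(i·T^{AD}_{i,l}); (4) if j = k and (B, C) = (Y, X), it equals 2·(i·T^{AD}_{i,l}). In particular ⁅i·T^{AB}_{i,j}, i·T^{CD}_{k,l}⁆ is proportional to δ_{jk}·i·T^{AD}_{i,l}. -/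
open Matrix

noncomputable section

namespace PauliAux

/-- Tensor-product operator built from a matrix at each site. -/
noncomputable def tOp (L : ℕ) (f : Fin L → Matrix (Fin 2) (Fin 2) ℂ) :
    Matrix (Fin L → Fin 2) (Fin L → Fin 2) ℂ :=
  fun v w => ∏ m : Fin L, f m (v m) (w m)

lemma tOp_mul (L : ℕ) (f g : Fin L → Matrix (Fin 2) (Fin 2) ℂ) :
    tOp L f * tOp L g = tOp L (fun m => f m * g m) := by
  ext v w
  simp only [Matrix.mul_apply, tOp]
  rw [Finset.prod_univ_sum]
  simp [Finset.prod_mul_distrib]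

lemma tOp_one (L : ℕ) : tOp L (fun _ => (1 : Matrix (Fin 2) (Fin 2) ℂ)) = 1 := by
  ext v w
  simp only [tOp, Matrix.one_apply]
  by_cases h : v = w
  · subst h; simp
  · rw [if_neg h]
    obtain ⟨m, hm⟩ : ∃ m, v m ≠ w m := by
      by_contra h'; push_neg at h'; exact h (funext h')
    exact Finset.prod_eq_zero (Finset.mem_univ m) (by simp [Matrix.one_apply, hm])

lemma site_eq_tOp (L : ℕ) (M : Matrix (Fin 2) (Fin 2) ℂ) (a : Fin L) :
    site L M a = tOp L (fun m => if m = a then M else 1) := by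
  ext v w
  simp only [site, tOp]
  refine Finset.prod_congr rfl fun m _ => ?_
  by_cases h : m = a <;> simp [h, Matrix.one_apply]

lemma prod_site_PZ (L : ℕ) (ℓ : List (Fin L)) (hℓ : ℓ.Nodup) :
    (ℓ.map (site L PZ)).prod = tOp L (fun m => if m ∈ ℓ then PZ else 1) := by
  induction ℓ with
  | nil => simpa using (tOp_one L).symm
  | cons a t ih =>
    simp only [List.map_cons, List.prod_cons]
    rw [site_eq_tOp, ih hℓ.of_cons, tOp_mul]
    have hf : (fun m => (if m = a then PZ else 1) * (if m ∈ t then PZ else 1)) =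
        (fun m => if m ∈ a :: t then PZ else 1) := by
      funext m
      by_cases hma : m = a
      · subst hma
        have hnt : m ∉ t := (List.nodup_cons.mp hℓ).1
        simp [hnt]
      · simp [hma]
    rw [hf]

lemma tOp_sub_single (L : ℕ) (f g : Fin L → Matrix (Fin 2) (Fin 2) ℂ) (a : Fin L)
    (h : ∀ m, m ≠ a → f m = g m) :
    tOp L f - tOp L g = tOp L (fun m => if m = a then f a - g a else f m) := by
  ext v w
  simp only [Matrix.sub_apply, tOp]
  rw [← Finset.mul_prod_erase Finset.univ _ (Finset.mem_univ a),
      ← Finset.mul_prod_erase Finset.univ _ (Finset.mem_univ a),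
      ← Finset.mul_prod_erase Finset.univ
        (fun m => (if m = a then f a - g a else f m) (v m) (w m)) (Finset.mem_univ a)]
  have hg : ∀ m ∈ Finset.univ.erase a, g m (v m) (w m) = f m (v m) (w m) := fun m hm => by
    rw [h m (Finset.mem_erase.mp hm).1]
  have hfa : ∀ m ∈ Finset.univ.erase a,
      (if m = a then f a - g a else f m) (v m) (w m) = f m (v m) (w m) := fun m hm => by
    rw [if_neg (Finset.mem_erase.mp hm).1]
  rw [Finset.prod_congr rfl hg, Finset.prod_congr rfl hfa]
  simp [sub_mul]

lemma tOp_smul_single (L : ℕ) (f : Fin L → Matrix (Fin 2) (Fin 2) ℂ) (a : Fin L) (c : ℂ) :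
    tOp L (fun m => if m = a then c • f a else f m) = c • tOp L f := by
  ext v w
  simp only [tOp, Matrix.smul_apply]
  rw [← Finset.mul_prod_erase Finset.univ _ (Finset.mem_univ a),
      ← Finset.mul_prod_erase Finset.univ (fun m => f m (v m) (w m)) (Finset.mem_univ a)]
  have hfa : ∀ m ∈ Finset.univ.erase a,
      (if m = a then c • f a else f m) (v m) (w m) = f m (v m) (w m) := fun m hm => by
    rw [if_neg (Finset.mem_erase.mp hm).1]
  rw [Finset.prod_congr rfl hfa]
  simp [mul_assoc]

/-- The site-function of a Pauli string. -/
def strF (L : ℕ) (A B : Matrix (Fin 2) (Fin 2) ℂ) (a b : Fin L) (m : Fin L) :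
    Matrix (Fin 2) (Fin 2) ℂ :=
  if m = a then A else if m = b then B else if a < m ∧ m < b then PZ else 1

lemma pauliString_eq_tOp (L : ℕ) (A B : Matrix (Fin 2) (Fin 2) ℂ) (a b : Fin L)
    (hab : a < b) :
    pauliString L A B a b = tOp L (strF L A B a b) := by
  rw [pauliString, site_eq_tOp, site_eq_tOp,
      prod_site_PZ _ _ ((List.nodup_finRange L).filter _), tOp_mul, tOp_mul]
  refine congrArg (tOp L) ?_
  funext m
  have hmem : (m ∈ (List.finRange L).filter (fun x => a < x ∧ x < b)) ↔ (a < m ∧ m < b) := by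
    simp [List.mem_filter]
  simp only [strF]
  by_cases h1 : m = a
  · subst h1
    have h2 : m ≠ b := ne_of_lt hab
    simp [h2, hmem, lt_irrefl]
  · by_cases h2 : m = b
    · subst h2
      have : ¬ (a < m ∧ m < m) := by simp
      simp [h1, hmem, this]
    · by_cases h3 : a < m ∧ m < b
      · simp [h1, h2, h3, hmem]
      · simp [h1, h2, h3, hmem]

lemma XY_sub_YX : PX * PY - PY * PX = (2 * Complex.I) • PZ := by
  ext x y
  fin_cases x <;> fin_cases y <;>
    simp [PX, PY, PZ, Matrix.mul_apply, Fin.sum_univ_two] <;> ring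

lemma YX_sub_XY : PY * PX - PX * PY = (-(2 * Complex.I)) • PZ := by
  ext x y
  fin_cases x <;> fin_cases y <;>
    simp [PX, PY, PZ, Matrix.mul_apply, Fin.sum_univ_two] <;> ring

lemma strF_comm_disj (L : ℕ) (A B C D : Matrix (Fin 2) (Fin 2) ℂ) (a b c d : Fin L)
    (hab : a < b) (hcd : c < d) (hbc : b < c) (m : Fin L) :
    strF L A B a b m * strF L C D c d m = strF L C D c d m * strF L A B a b m := by
  simp only [strF]
  split_ifs <;> first
    | (exfalso; simp only [Fin.lt_def, Fin.ext_iff, not_and, not_lt, ne_eq] at *; omega)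
    | simp

lemma strF_comm_ne (L : ℕ) (A B C D : Matrix (Fin 2) (Fin 2) ℂ) (a b d : Fin L)
    (hab : a < b) (hbd : b < d) (m : Fin L) (hm : m ≠ b) :
    strF L A B a b m * strF L C D b d m = strF L C D b d m * strF L A B a b m := by
  simp only [strF]
  split_ifs <;> first
    | (exfalso; simp only [Fin.lt_def, Fin.ext_iff, not_and, not_lt, ne_eq] at *; omega)
    | simp

lemma strF_glue (L : ℕ) (A B C D : Matrix (Fin 2) (Fin 2) ℂ) (a b d : Fin L)
    (hab : a < b) (hbd : b < d) (m : Fin L) (hm : m ≠ b) :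
    strF L C D b d m * strF L A B a b m = strF L A D a d m := by
  simp only [strF]
  split_ifs <;> first
    | (exfalso; simp only [Fin.lt_def, Fin.ext_iff, not_and, not_lt, ne_eq] at *; omega)
    | simp

lemma strF_apply_right (L : ℕ) (A B : Matrix (Fin 2) (Fin 2) ℂ) (a b : Fin L)
    (hab : a < b) : strF L A B a b b = B := by
  simp [strF, (ne_of_gt hab : b ≠ a)]

lemma strF_apply_left (L : ℕ) (A B : Matrix (Fin 2) (Fin 2) ℂ) (a b : Fin L) :
    strF L A B a b a = A := by
  simp [strF]

lemma strF_mid (L : ℕ) (A B : Matrix (Fin 2) (Fin 2) ℂ) (a b m : Fin L)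
    (ham : a < m) (hmb : m < b) : strF L A B a b m = PZ := by
  simp only [strF]
  rw [if_neg (ne_of_gt ham), if_neg (ne_of_lt hmb), if_pos ⟨ham, hmb⟩]

end PauliAux

open PauliAux in

/-- Commutation relations of Pauli strings: for `1 ≤ i < j ≤ k < l ≤ L` and
`A, B, C, D ∈ {X, Y}`, the commutator `⁅i·T^{AB}_{i,j}, i·T^{CD}_{k,l}⁆` is
proportional to `δ_{jk} · i·T^{AD}_{i,l}`:
(1) if `j < k` it vanishes; (2) if `j = k` and `B = C` it vanishes;
(3) if `j = k` and `(B, C) = (X, Y)` it equals `-2·(i·T^{AD}_{i,l})`;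
(4) if `j = k` and `(B, C) = (Y, X)` it equals `2·(i·T^{AD}_{i,l})`. -/
theorem pauliString_bracket_pauliString (L : ℕ) (hL : 2 ≤ L)
    (i j k l : Fin L) (hij : i < j) (hjk : j ≤ k) (hkl : k < l)
    (A B C D : Matrix (Fin 2) (Fin 2) ℂ)
    (hA : A = PX ∨ A = PY) (hB : B = PX ∨ B = PY)
    (hC : C = PX ∨ C = PY) (hD : D = PX ∨ D = PY) :
    (j < k →
      ⁅Complex.I • pauliString L A B i j, Complex.I • pauliString L C D k l⁆ = 0) ∧
    (j = k → B = C →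
      ⁅Complex.I • pauliString L A B i j, Complex.I • pauliString L C D k l⁆ = 0) ∧
    (j = k → B = PX → C = PY →
      ⁅Complex.I • pauliString L A B i j, Complex.I • pauliString L C D k l⁆ =
        (-2 : ℂ) • (Complex.I • pauliString L A D i l)) ∧
    (j = k → B = PY → C = PX →
      ⁅Complex.I • pauliString L A B i j, Complex.I • pauliString L C D k l⁆ =
        (2 : ℂ) • (Complex.I • pauliString L A D i l)) := by
  have hik : i < k := lt_of_lt_of_le hij hjk
  have hil : i < l := lt_trans hik hkl
  have hbr : ∀ P Q : Matrix (Fin L → Fin 2) (Fin L → Fin 2) ℂ,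
      ⁅Complex.I • P, Complex.I • Q⁆ = -(P * Q - Q * P) := by
    intro P Q
    have h1 : (Complex.I • P) * (Complex.I • Q) = -(P * Q) := by
      rw [smul_mul_assoc, mul_smul_comm, smul_smul, Complex.I_mul_I, neg_one_smul]
    have h2 : (Complex.I • Q) * (Complex.I • P) = -(Q * P) := by
      rw [smul_mul_assoc, mul_smul_comm, smul_smul, Complex.I_mul_I, neg_one_smul]
    rw [Ring.lie_def, h1, h2]
    abel
  refine ⟨?_, ?_, ?_, ?_⟩
  · intro hjk'
    rw [hbr, pauliString_eq_tOp L A B i j hij, pauliString_eq_tOp L C D k l hkl,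
        tOp_mul, tOp_mul]
    have hfg : (fun m => strF L A B i j m * strF L C D k l m)
        = (fun m => strF L C D k l m * strF L A B i j m) :=
      funext fun m => strF_comm_disj L A B C D i j k l hij hkl hjk' m
    rw [hfg, sub_self, neg_zero]
  · rintro rfl rfl
    rw [hbr, pauliString_eq_tOp L A B i j hij, pauliString_eq_tOp L B D j l hkl,
        tOp_mul, tOp_mul]
    have hfg : (fun m => strF L A B i j m * strF L B D j l m)
        = (fun m => strF L B D j l m * strF L A B i j m) := by
      funext m
      by_cases hm : m = j
      · subst hm
        rw [strF_apply_right L A B i m hij, strF_apply_left]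
      · exact strF_comm_ne L A B B D i j l hij hkl m hm
    rw [hfg, sub_self, neg_zero]
  · rintro rfl hBX hCY
    subst hBX; subst hCY
    rw [hbr, pauliString_eq_tOp L A PX i j hij, pauliString_eq_tOp L PY D j l hkl,
        tOp_mul, tOp_mul]
    have hcomm : ∀ m, m ≠ j →
        strF L A PX i j m * strF L PY D j l m = strF L PY D j l m * strF L A PX i j m :=
      fun m hm => strF_comm_ne L A PX PY D i j l hij hkl m hm
    rw [tOp_sub_single L _ _ j hcomm]
    have hfun : (fun m => if m = j then
          strF L A PX i j j * strF L PY D j l j - strF L PY D j l j * strF L A PX i j j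
        else strF L A PX i j m * strF L PY D j l m)
        = (fun m => if m = j then (2 * Complex.I) • strF L A D i l j
            else strF L A D i l m) := by
      funext m
      by_cases hm : m = j
      · subst hm
        rw [if_pos rfl, if_pos rfl, strF_apply_right L A PX i m hij, strF_apply_left,
            strF_mid L A D i l m hij (lt_of_le_of_lt hjk hkl), XY_sub_YX]
      · rw [if_neg hm, if_neg hm, hcomm m hm,
            strF_glue L A PX PY D i j l hij hkl m hm]
    rw [hfun, tOp_smul_single L (strF L A D i l) j (2 * Complex.I),
        ← pauliString_eq_tOp L A D i l hil, smul_smul,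
        show (-2 : ℂ) * Complex.I = -(2 * Complex.I) by ring, neg_smul]
  · rintro rfl hBY hCX
    subst hBY; subst hCX
    rw [hbr, pauliString_eq_tOp L A PY i j hij, pauliString_eq_tOp L PX D j l hkl,
        tOp_mul, tOp_mul]
    have hcomm : ∀ m, m ≠ j →
        strF L A PY i j m * strF L PX D j l m = strF L PX D j l m * strF L A PY i j m :=
      fun m hm => strF_comm_ne L A PY PX D i j l hij hkl m hm
    rw [tOp_sub_single L _ _ j hcomm]
    have hfun : (fun m => if m = j then
          strF L A PY i j j * strF L PX D j l j - strF L PX D j l j * strF L A PY i j j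
        else strF L A PY i j m * strF L PX D j l m)
        = (fun m => if m = j then (-(2 * Complex.I)) • strF L A D i l j
            else strF L A D i l m) := by
      funext m
      by_cases hm : m = j
      · subst hm
        rw [if_pos rfl, if_pos rfl, strF_apply_right L A PY i m hij, strF_apply_left,
            strF_mid L A D i l m hij (lt_of_le_of_lt hjk hkl), YX_sub_XY]
      · rw [if_neg hm, if_neg hm, hcomm m hm,
            strF_glue L A PY PX D i j l hij hkl m hm]
    rw [hfun, tOp_smul_single L (strF L A D i l) j (-(2 * Complex.I)),
        ← pauliString_eq_tOp L A D i l hil, smul_smul, neg_smul, neg_neg]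
end
end

section
/- Let L ≥ 2. Index the standard basis of ℂ^{2^L} by functions v : {1,…,L} → {0,1}, and let R be the permutation matrix of lattice inversion, i.e. R sends the basis vector e_v to e_{v'} where v'(j) = v(L+1−j). Let 𝔦_OBC be the Lie algebra over ℝ generated by {i·(Z_1 + ⋯ + Z_L), i·(X_1·X_2 + ⋯ + X_{L−1}·X_L)} inside the 2^L × 2^L complex matrices. Then every element H ∈ 𝔦_OBC commutes with R: H·R = R·H. -/
open Matrix

attribute [local instance 100] LieRing.ofAssociativeRing

noncomputable section

/-- The sum `Z_1 + Z_2 + ⋯ + Z_L`. -/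
def zSum (L : ℕ) : Matrix (Fin L → Fin 2) (Fin L → Fin 2) ℂ :=
  ∑ j : Fin L, site L PZ j

/-- The sum `X_1·X_2 + X_2·X_3 + ⋯ + X_{L-1}·X_L` (open boundary conditions). -/
def xxSumOBC (L : ℕ) : Matrix (Fin L → Fin 2) (Fin L → Fin 2) ℂ :=
  ∑ j : Fin (L - 1),
    site L PX ⟨(j : ℕ), by have := j.isLt; omega⟩ *
      site L PX ⟨(j : ℕ) + 1, by have := j.isLt; omega⟩

/-- The lattice inversion on basis labels: `(revFun v) j = v (L + 1 - j)` (in `1`-based site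
labels, i.e. `j ↦ L - 1 - j` in `0`-based labels). -/
def revFun (L : ℕ) (v : Fin L → Fin 2) : Fin L → Fin 2 :=
  fun j => v ⟨L - 1 - (j : ℕ), by have := j.isLt; omega⟩

/-- The permutation matrix `R` of lattice inversion, sending the standard basis vector `e_v`
to `e_{v'}` where `v' j = v (L + 1 - j)`. -/
def inversion (L : ℕ) : Matrix (Fin L → Fin 2) (Fin L → Fin 2) ℂ :=
  fun w v => if w = revFun L v then 1 else 0

/-! Conjugation by `R` is the algebra automorphism relabelling the sites by `j ↦ L + 1 - j`.
It maps `M_j` to `M_{L+1-j}`, so it permutes the summands of `Z_1 + ⋯ + Z_L`, and it sends the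
bond term `X_j X_{j+1}` to `X_{L+1-j} X_{L-j}`, which is again a bond term because operators on
distinct sites commute. Hence both generators lie in the centralizer of `R`, a subalgebra and
therefore a Lie subalgebra, which then contains all of `𝔦_OBC`. -/

namespace Matrix

variable {ι n R : Type*}

def kroneckerPi [CommMonoid R] [Fintype ι] (A : ι → Matrix n n R) :
    Matrix (ι → n) (ι → n) R :=
  fun v w => ∏ i, A i (v i) (w i)

variable [CommSemiring R] [Fintype ι]

theorem kroneckerPi_mul [DecidableEq ι] [Fintype n] (A B : ι → Matrix n n R) :
    kroneckerPi A * kroneckerPi B = kroneckerPi (A * B) := by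
  ext v w
  simp only [kroneckerPi, mul_apply, Pi.mul_apply, Fintype.prod_sum, Finset.prod_mul_distrib]

theorem submatrix_kroneckerPi {ι' : Type*} [Fintype ι'] (σ : ι ≃ ι') (A : ι → Matrix n n R) :
    (kroneckerPi A).submatrix (· ∘ σ) (· ∘ σ) = kroneckerPi (A ∘ σ.symm) := by
  ext v w
  change ∏ i, A i (v (σ i)) (w (σ i)) = ∏ i', A (σ.symm i') (v i') (w i')
  rw [← σ.prod_comp]
  simp

end Matrix

section SpinChain

variable {L : ℕ}

theorem site_eq_kroneckerPi (M : Matrix (Fin 2) (Fin 2) ℂ) (j : Fin L) :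
    site L M j = kroneckerPi (Pi.mulSingle j M) := by
  ext v w
  refine Finset.prod_congr rfl fun k _ => ?_
  by_cases hk : k = j <;> simp [hk, one_apply]

theorem site_commute (M N : Matrix (Fin 2) (Fin 2) ℂ) {j k : Fin L} (h : j ≠ k) :
    Commute (site L M j) (site L N k) := by
  simp only [site_eq_kroneckerPi, Commute, SemiconjBy, kroneckerPi_mul,
    (Pi.mulSingle_commute (f := fun _ => Matrix (Fin 2) (Fin 2) ℂ) h M N).eq]

def relabelSites (σ : Equiv.Perm (Fin L)) :
    Matrix (Fin L → Fin 2) (Fin L → Fin 2) ℂ ≃ₐ[ℂ] Matrix (Fin L → Fin 2) (Fin L → Fin 2) ℂ :=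
  reindexAlgEquiv ℂ ℂ (σ.arrowCongr (Equiv.refl (Fin 2)))

theorem relabelSites_apply (σ : Equiv.Perm (Fin L))
    (A : Matrix (Fin L → Fin 2) (Fin L → Fin 2) ℂ) :
    relabelSites σ A = A.submatrix (· ∘ σ) (· ∘ σ) :=
  rfl

theorem relabelSites_site (σ : Equiv.Perm (Fin L)) (M : Matrix (Fin 2) (Fin 2) ℂ) (j : Fin L) :
    relabelSites σ (site L M j) = site L M (σ j) := by
  rw [relabelSites_apply, site_eq_kroneckerPi, site_eq_kroneckerPi, submatrix_kroneckerPi,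
    Pi.mulSingle_comp_equiv, Equiv.symm_symm]

theorem relabelSites_zSum (σ : Equiv.Perm (Fin L)) : relabelSites σ (zSum L) = zSum L := by
  simp only [zSum, map_sum, relabelSites_site]
  exact Equiv.sum_comp σ (site L PZ)

theorem relabelSites_rev_xxSumOBC : relabelSites Fin.revPerm (xxSumOBC L) = xxSumOBC L := by
  rw [xxSumOBC, map_sum]
  -- the reflection sends the bond `(j, j+1)` to the bond `(L-2-j, L-1-j)`, in `0`-based labels
  refine Fintype.sum_equiv Fin.revPerm _ _ fun j => ?_
  have hj := j.isLt
  rw [map_mul, relabelSites_site, relabelSites_site, (site_commute PX PX ?_).eq]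
  · congr 2 <;> ext <;> simp [Fin.rev] <;> omega
  · simp [Fin.ext_iff, Fin.rev]
    omega

theorem revFun_eq_comp_rev : revFun L = (· ∘ Fin.revPerm) := by
  funext v j
  simp only [revFun, Function.comp_apply, Fin.revPerm_apply, Fin.rev]
  congr 2
  omega

theorem revFun_involutive : Function.Involutive (revFun L) := by
  intro v
  ext j
  simp [revFun_eq_comp_rev]

theorem mul_inversion (A : Matrix (Fin L → Fin 2) (Fin L → Fin 2) ℂ) :
    A * inversion L = inversion L * relabelSites Fin.revPerm A := by
  ext w v
  simp [mul_apply, inversion, relabelSites_apply, ← revFun_eq_comp_rev, eq_comm (a := w),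
    revFun_involutive.eq_iff, revFun_involutive w]

theorem mul_inversion_of_relabelSites_rev_eq {A : Matrix (Fin L → Fin 2) (Fin L → Fin 2) ℂ}
    (hA : relabelSites Fin.revPerm A = A) : A * inversion L = inversion L * A := by
  rw [mul_inversion, hA]

end SpinChain

theorem indep_obc_commutes_inversion_general (L : ℕ) :
    ∀ H ∈ LieSubalgebra.lieSpan ℝ (Matrix (Fin L → Fin 2) (Fin L → Fin 2) ℂ)
        {Complex.I • zSum L, Complex.I • xxSumOBC L},
      H * inversion L = inversion L * H := by
  have hgen : {Complex.I • zSum L, Complex.I • xxSumOBC L} ⊆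
      (lieSubalgebraOfSubalgebra ℝ _ (Subalgebra.centralizer ℝ {inversion L}) : Set _) := by
    rintro _ (rfl | rfl) _ rfl <;> refine (mul_inversion_of_relabelSites_rev_eq ?_).symm
    · rw [map_smul, relabelSites_zSum]
    · rw [map_smul, relabelSites_rev_xxSumOBC]
  intro H hH
  exact (LieSubalgebra.lieSpan_le.2 hgen hH (inversion L) rfl).symm

/-- For `L ≥ 2`, every element of the Lie algebra `𝔦_OBC` generated over `ℝ` by
`{i·(Z_1 + ⋯ + Z_L), i·(X_1 X_2 + ⋯ + X_{L-1} X_L)}` commutes with the lattice-inversion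
permutation matrix `R`. -/
theorem indep_obc_commutes_inversion (L : ℕ) (hL : 2 ≤ L) :
    ∀ H ∈ LieSubalgebra.lieSpan ℝ (Matrix (Fin L → Fin 2) (Fin L → Fin 2) ℂ)
        {Complex.I • zSum L, Complex.I • xxSumOBC L},
      H * inversion L = inversion L * H :=
  indep_obc_commutes_inversion_general L
end
end
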